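/- arXiv:1402.1975 — 6 statements merged into one kernel-verified Lean document; each statement's English description precedes it below -/
import Mathlib

section
/- For every k, ℓ ≥ 1 there exists p > 0 (depending only on k and ℓ) such that for every Borel-measurable function f : ℝ^k → ℝ, at least one of the following holds: μ{u : Z_1(u) < Z_2(u) < … < Z_ℓ(u)} > p, or μ{u : Z_1(u) = Z_2(u) = … = Z_ℓ(u)} > p, or μ{u : Z_1(u) > Z_2(u) > … > Z_ℓ(u)} > p. -/
namespace AuxRamsey

/-- Bound function for the greedy Erdős–Rado construction. -/
def Fb (q : ℕ) : ℕ → ℕ → ℕ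
  | 0, _ => 0
  | j+1, m => Fb q j (m+1) * 3 ^ ((m+1).choose q) + 1

lemma greedy (q : ℕ) (χ : Finset ℕ → Fin 3) :
    ∀ (j : ℕ) (ctx X : Finset ℕ) (m : ℕ), ctx.card ≤ m → Fb q j m ≤ X.card →
    (∀ p ∈ ctx, ∀ x ∈ X, p < x) →
    (∀ A : Finset ℕ, A ⊆ ctx → A.card = q → ∀ x ∈ X, ∀ y ∈ X,
      χ (insert x A) = χ (insert y A)) →
    ∃ S : Finset ℕ, S ⊆ X ∧ S.card = j ∧
      (∀ A : Finset ℕ, A ⊆ ctx ∪ S → A.card = q → ∀ x ∈ S, ∀ y ∈ S,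
        (∀ b ∈ A, b < x) → (∀ b ∈ A, b < y) → χ (insert x A) = χ (insert y A)) := by
  intro j
  induction j with
  | zero =>
    intro ctx X m _ _ _ _
    exact ⟨∅, by simp, by simp, by simp⟩
  | succ j ih =>
    intro ctx X m hm hX hlt hhom
    have hXne : X.Nonempty := by
      apply Finset.card_pos.mp
      simp only [Fb] at hX; omega
    set a := X.min' hXne with ha
    have haX : a ∈ X := X.min'_mem hXne
    have haltx : ∀ x ∈ X.erase a, a < x := by
      intro x hx
      rw [ha] at hx ⊢
      exact X.min'_lt_of_mem_erase_min' hXne hx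
    classical
    set P := ((insert a ctx).powersetCard q) with hP
    set φ : ℕ → (P → Fin 3) := fun x A => χ (insert x (A : Finset ℕ)) with hφ
    have hcardP : Fintype.card (P → Fin 3) ≤ 3 ^ ((m+1).choose q) := by
      rw [Fintype.card_fun, Fintype.card_coe, hP, Finset.card_powersetCard, Fintype.card_fin]
      exact Nat.pow_le_pow_right (by norm_num)
        (Nat.choose_le_choose q ((Finset.card_insert_le _ _).trans (by omega)))
    have hpig : (Finset.univ : Finset (P → Fin 3)).card * Fb q j (m+1) ≤ (X.erase a).card := by
      rw [Finset.card_univ, Finset.card_erase_of_mem haX]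
      have h1 : Fb q (j+1) m ≤ X.card := hX
      simp only [Fb] at h1
      calc Fintype.card (P → Fin 3) * Fb q j (m+1)
          ≤ 3 ^ ((m+1).choose q) * Fb q j (m+1) := Nat.mul_le_mul_right _ hcardP
        _ = Fb q j (m+1) * 3 ^ ((m+1).choose q) := Nat.mul_comm _ _
        _ ≤ X.card - 1 := by omega
    obtain ⟨y0, -, hy0⟩ := Finset.exists_le_card_fiber_of_mul_le_card_of_maps_to
      (f := φ) (fun x _ => Finset.mem_univ (φ x)) ⟨_, Finset.mem_univ (fun _ => (0 : Fin 3))⟩ hpig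
    set X' := {x ∈ X.erase a | φ x = y0} with hX'
    have hX'sub : X' ⊆ X.erase a := Finset.filter_subset _ _
    have hX'subX : X' ⊆ X := hX'sub.trans (Finset.erase_subset _ _)
    have hctx' : (insert a ctx).card ≤ m + 1 := (Finset.card_insert_le _ _).trans (by omega)
    have hlt' : ∀ p ∈ insert a ctx, ∀ x ∈ X', p < x := by
      intro p hp x hx
      rcases Finset.mem_insert.mp hp with rfl | hp
      · exact haltx x (hX'sub hx)
      · exact hlt p hp x (hX'subX hx)
    have hhom' : ∀ A : Finset ℕ, A ⊆ insert a ctx → A.card = q → ∀ x ∈ X', ∀ y ∈ X',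
        χ (insert x A) = χ (insert y A) := by
      intro A hA hAq x hx y hy
      have hAP : A ∈ P := Finset.mem_powersetCard.mpr ⟨hA, hAq⟩
      have hxv := (Finset.mem_filter.mp hx).2
      have hyv := (Finset.mem_filter.mp hy).2
      have := congrFun (hxv.trans hyv.symm) ⟨A, hAP⟩
      simpa [hφ] using this
    obtain ⟨S', hS'sub, hS'card, hS'prop⟩ := ih (insert a ctx) X' (m+1) hctx' hy0 hlt' hhom'
    have haS' : a ∉ S' := fun h => (Finset.mem_erase.mp (hS'sub.trans hX'sub h)).1 rfl
    refine ⟨insert a S', ?_, ?_, ?_⟩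
    · intro x hx
      rcases Finset.mem_insert.mp hx with rfl | hx
      · exact haX
      · exact hX'subX (hS'sub hx)
    · rw [Finset.card_insert_of_notMem haS', hS'card]
    · intro A hA hAq x hx y hy hbx hby
      have hAsub' : A ⊆ insert a ctx ∪ S' := by
        rwa [Finset.insert_union, ← Finset.union_insert]
      -- if all elements of A are < a then A ⊆ ctx
      have hActx : ∀ z, (∀ b ∈ A, b < z) → z = a → A ⊆ ctx := by
        intro z hbz hza b hb
        rcases Finset.mem_union.mp (hA hb) with hbctx | hbins
        · exact hbctx
        · exfalso
          have hbz' := hbz b hb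
          rcases Finset.mem_insert.mp hbins with hba | hbS'
          · omega
          · have := haltx b (hX'sub (hS'sub hbS')); omega
      rcases Finset.mem_insert.mp hx with hxa | hxS'
      · rcases Finset.mem_insert.mp hy with hya | hyS'
        · rw [hxa, hya]
        · rw [hxa]; exact hhom A (hActx x hbx hxa) hAq a haX y (hX'subX (hS'sub hyS'))
      · rcases Finset.mem_insert.mp hy with hya | hyS'
        · rw [hya]; exact hhom A (hActx y hby hya) hAq x (hX'subX (hS'sub hxS')) a haX
        · exact hS'prop A hAsub' hAq x hxS' y hyS' hbx hby

/-- Finite hypergraph Ramsey theorem for 3 colors, uniformity `q+1`. -/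
theorem exists_ramsey (q n : ℕ) : ∃ M : ℕ, ∀ χ : Finset ℕ → Fin 3,
    ∃ S : Finset ℕ, S ⊆ Finset.range M ∧ S.card = n ∧
      ∃ a : Fin 3, ∀ T ⊆ S, T.card = q + 1 → χ T = a := by
  classical
  induction q with
  | zero =>
    refine ⟨3 * n, fun χ => ?_⟩
    obtain ⟨y0, -, hy0⟩ := Finset.exists_le_card_fiber_of_mul_le_card_of_maps_to
      (f := fun x => χ {x}) (s := Finset.range (3 * n)) (t := Finset.univ)
      (fun x _ => Finset.mem_univ _) ⟨0, Finset.mem_univ _⟩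
      (by rw [Finset.card_univ, Fintype.card_fin, Finset.card_range])
    obtain ⟨S, hSsub, hScard⟩ := Finset.exists_subset_card_eq hy0
    refine ⟨S, (hSsub.trans (Finset.filter_subset _ _)), hScard, y0, ?_⟩
    intro T hT hTcard
    obtain ⟨x, rfl⟩ := Finset.card_eq_one.mp hTcard
    have := hSsub (hT (Finset.mem_singleton_self x))
    exact (Finset.mem_filter.mp this).2
  | succ q ih =>
    obtain ⟨t, ht⟩ := ih
    refine ⟨Fb (q+1) t 0, fun χ => ?_⟩
    obtain ⟨St, hStsub, hStcard, hStprop⟩ := greedy (q+1) χ t ∅ (Finset.range (Fb (q+1) t 0)) 0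
      (by simp) (by rw [Finset.card_range]) (by simp) (by intro A hA hAq; simp_all)
    set e := St.orderEmbOfFin hStcard with he
    set e' : ℕ → ℕ := fun i => if h : i < t then e ⟨i, h⟩ else 0 with he'
    have he'mem : ∀ i < t, e' i ∈ St := by
      intro i hi; simp only [he', dif_pos hi]; exact St.orderEmbOfFin_mem hStcard _
    have he'mono : ∀ i j : ℕ, i < j → j < t → e' i < e' j := by
      intro i j hij hj
      simp only [he', dif_pos hj, dif_pos (hij.trans hj)]
      exact (St.orderEmbOfFin hStcard).strictMono (by exact hij)
    have he'inj : ∀ i j : ℕ, i < t → j < t → e' i = e' j → i = j := by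
      intro i j hi hj hij
      rcases lt_trichotomy i j with h | h | h
      · exact absurd hij (ne_of_lt (he'mono i j h hj))
      · exact h
      · exact absurd hij.symm (ne_of_lt (he'mono j i h hi))
    set ψ : Finset ℕ → Fin 3 := fun B =>
      if h : B.sup id + 1 < t then χ (insert (e ⟨B.sup id + 1, h⟩) (B.image e')) else 0 with hψ
    obtain ⟨B, hBsub, hBcard, a0, hB⟩ := ht ψ
    have hBlt : ∀ i ∈ B, i < t := fun i hi => Finset.mem_range.mp (hBsub hi)
    refine ⟨B.image e', ?_, ?_, a0, ?_⟩
    · intro x hx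
      obtain ⟨i, hi, rfl⟩ := Finset.mem_image.mp hx
      exact hStsub (he'mem i (hBlt i hi))
    · rw [Finset.card_image_of_injOn, hBcard]
      intro i hi j hj
      exact he'inj i j (hBlt i hi) (hBlt j hj)
    · intro T hT hTcard
      set B' := {i ∈ B | e' i ∈ T} with hB'
      have hB'B : B' ⊆ B := Finset.filter_subset _ _
      have himg : B'.image e' = T := by
        apply Finset.Subset.antisymm
        · intro x hx
          obtain ⟨i, hi, rfl⟩ := Finset.mem_image.mp hx
          exact (Finset.mem_filter.mp hi).2
        · intro x hx
          obtain ⟨i, hi, rfl⟩ := Finset.mem_image.mp (hT hx)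
          exact Finset.mem_image.mpr ⟨i, Finset.mem_filter.mpr ⟨hi, hx⟩, rfl⟩
      have hinjB' : ∀ i ∈ B', ∀ j ∈ B', e' i = e' j → i = j := fun i hi j hj =>
        he'inj i j (hBlt i (hB'B hi)) (hBlt j (hB'B hj))
      have hB'card : B'.card = q + 2 := by
        rw [← hTcard, ← himg, Finset.card_image_of_injOn hinjB']
      have hB'ne : B'.Nonempty := Finset.card_pos.mp (by omega)
      set mx := B'.max' hB'ne with hmx
      have hmxB' : mx ∈ B' := B'.max'_mem hB'ne
      have hmxt : mx < t := hBlt mx (hB'B hmxB')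
      set B'' := B'.erase mx with hB''
      have hB''card : B''.card = q + 1 := by
        rw [hB'', Finset.card_erase_of_mem hmxB', hB'card]; omega
      have hB''ne : B''.Nonempty := Finset.card_pos.mp (by omega)
      have hB''lt : ∀ i ∈ B'', i < mx := by
        intro i hi
        have h1 := Finset.mem_erase.mp hi
        exact lt_of_le_of_ne (B'.le_max' i h1.2) h1.1
      have hsup : B''.sup id + 1 ≤ mx := by
        have h0 : (⊥ : ℕ) < mx := by
          obtain ⟨i, hi⟩ := hB''ne
          have := hB''lt i hi
          simp only [bot_eq_zero]
          omega
        have hslt : B''.sup id < mx := (Finset.sup_lt_iff h0).mpr (fun b hb => hB''lt b hb)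
        omega
      have hsupt : B''.sup id + 1 < t := by omega
      have hψB'' : ψ B'' = a0 := hB B'' (fun i hi => hB'B (Finset.mem_of_mem_erase hi)) hB''card
      rw [hψ] at hψB''
      simp only [dif_pos hsupt] at hψB''
      -- now apply the greedy property
      have hA : B''.image e' ⊆ ∅ ∪ St := by
        intro x hx
        obtain ⟨i, hi, rfl⟩ := Finset.mem_image.mp hx
        exact Finset.mem_union_right _ (he'mem i (hBlt i (hB'B (Finset.mem_of_mem_erase hi))))
      have hAcard : (B''.image e').card = q + 1 := by
        rw [Finset.card_image_of_injOn (fun i hi j hj =>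
          hinjB' i (Finset.mem_of_mem_erase hi) j (Finset.mem_of_mem_erase hj)), hB''card]
      have hxSt : e' mx ∈ St := he'mem mx hmxt
      have hySt : e ⟨B''.sup id + 1, hsupt⟩ ∈ St := St.orderEmbOfFin_mem hStcard _
      have hbx : ∀ b ∈ B''.image e', b < e' mx := by
        intro b hb
        obtain ⟨i, hi, rfl⟩ := Finset.mem_image.mp hb
        exact he'mono i mx (hB''lt i hi) hmxt
      have hey : e ⟨B''.sup id + 1, hsupt⟩ = e' (B''.sup id + 1) := by
        simp only [he', dif_pos hsupt]
      have hby : ∀ b ∈ B''.image e', b < e ⟨B''.sup id + 1, hsupt⟩ := by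
        intro b hb
        obtain ⟨i, hi, rfl⟩ := Finset.mem_image.mp hb
        rw [hey]
        exact he'mono i _ (by have := Finset.le_sup (f := id) hi; simp only [id_eq] at this; omega) hsupt
      have hkey := hStprop (B''.image e') hA hAcard (e' mx)
        hxSt (e ⟨B''.sup id + 1, hsupt⟩) hySt hbx hby
      have hTeq : insert (e' mx) (B''.image e') = T := by
        rw [← Finset.image_insert, hB'', Finset.insert_erase hmxB', himg]
      rw [hTeq] at hkey
      rw [hkey, hψB'']

end AuxRamsey

open MeasureTheory
open scoped ENNReal

namespace AuxMeas

variable (ν : Measure ℝ) [IsProbabilityMeasure ν]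

/-- Pushing forward the product measure along precomposition with an injection gives
the product measure. -/
lemma map_comp_pi {M N : ℕ} (h : Fin N → Fin M) (hinj : Function.Injective h) :
    (Measure.pi fun _ : Fin M => ν).map (fun u (j : Fin N) => u (h j)) =
      Measure.pi fun _ : Fin N => ν := by
  have hmeas : Measurable (fun (u : Fin M → ℝ) (j : Fin N) => u (h j)) :=
    measurable_pi_lambda _ fun j => measurable_pi_apply (h j)
  refine (Measure.pi_eq fun s hs => ?_).symm
  rw [Measure.map_apply hmeas (MeasurableSet.univ_pi hs)]
  set s' : Fin M → Set ℝ := fun i => ⋂ (j : Fin N) (_ : h j = i), s j with hs'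
  have hpre : (fun u (j : Fin N) => u (h j)) ⁻¹' (Set.pi Set.univ s) = Set.pi Set.univ s' := by
    ext u
    simp only [Set.mem_preimage, Set.mem_pi, Set.mem_univ, forall_true_left, hs',
      Set.mem_iInter]
    constructor
    · intro H i j hji; subst hji; exact H j
    · intro H j; exact H (h j) j rfl
  rw [hpre, Measure.pi_pi]
  have hoff : ∀ i : Fin M, i ∉ Finset.univ.image h → ν (s' i) = 1 := by
    intro i hi
    have : ∀ j : Fin N, h j ≠ i := by
      intro j hj; exact hi (Finset.mem_image.mpr ⟨j, Finset.mem_univ _, hj⟩)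
    have : s' i = Set.univ := by
      simp only [hs']; rw [Set.iInter_eq_univ]
      intro j; rw [Set.iInter_eq_univ]; intro hj; exact absurd hj (this j)
    rw [this]; exact measure_univ
  have hon : ∀ j : Fin N, s' (h j) = s j := by
    intro j
    apply Set.Subset.antisymm
    · intro x hx
      simp only [hs', Set.mem_iInter] at hx
      exact hx j rfl
    · intro x hx
      simp only [hs', Set.mem_iInter]
      intro j' hj'
      rw [hinj hj']; exact hx
  rw [← Finset.prod_subset (Finset.subset_univ (Finset.univ.image h))
      (fun i _ hi => hoff i hi)]
  rw [Finset.prod_image (fun i _ j _ hij => hinj hij)]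
  exact Finset.prod_congr rfl fun j _ => congrArg ν (hon j)

/-- Transitive consecutive relations propagate along `Fin L`. -/
lemma consec_trans {L : ℕ} (r : ℝ → ℝ → Prop) (htr : Transitive r) (g : Fin L → ℝ)
    (H : ∀ i : ℕ, ∀ h : i + 1 < L, r (g ⟨i, by omega⟩) (g ⟨i + 1, h⟩)) :
    ∀ a b : Fin L, a < b → r (g a) (g b) := by
  have key : ∀ n : ℕ, ∀ a b : Fin L, b.1 = a.1 + n + 1 → r (g a) (g b) := by
    intro n
    induction n with
    | zero =>
      intro a b hb
      have h1 : a.1 + 1 < L := by omega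
      have hbe : b = ⟨a.1 + 1, h1⟩ := Fin.ext (show b.1 = a.1 + 1 by omega)
      rw [hbe]
      exact H a.1 h1
    | succ n ihn =>
      intro a b hb
      have h1 : a.1 + n + 1 < L := by omega
      have h2 : a.1 + n + 1 + 1 < L := by omega
      have hb' : b = ⟨a.1 + n + 1 + 1, h2⟩ := Fin.ext (show b.1 = a.1 + n + 1 + 1 by omega)
      refine htr (ihn a ⟨a.1 + n + 1, h1⟩ rfl) ?_
      rw [hb']
      exact H (a.1 + n + 1) h2
  intro a b hab
  exact key (b.1 - a.1 - 1) a b (by have := (Fin.lt_def).mp hab; omega)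

end AuxMeas

namespace AuxBlock

/-- The `i`-th sliding-window value. -/
noncomputable def Zfun (k ℓ : ℕ) (f : (Fin k → ℝ) → ℝ) (i : Fin ℓ)
    (u : Fin (ℓ + k - 1) → ℝ) : ℝ :=
  f fun j : Fin k => u ⟨i.1 + j.1, by have := i.isLt; have := j.isLt; omega⟩

/-- The three target sets. -/
noncomputable def GSet (k ℓ : ℕ) (f : (Fin k → ℝ) → ℝ) : Fin 3 → Set (Fin (ℓ + k - 1) → ℝ) :=
  fun c =>
    if c = 0 then {u | StrictMono fun i : Fin ℓ => Zfun k ℓ f i u}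
    else if c = 1 then {u | ∀ i i' : Fin ℓ, Zfun k ℓ f i u = Zfun k ℓ f i' u}
    else {u | StrictAnti fun i : Fin ℓ => Zfun k ℓ f i u}

/-- three-valued comparison -/
noncomputable def cmp3 (x y : ℝ) : Fin 3 := if x < y then 0 else if x = y then 1 else 2

lemma cmp3_lt {x y : ℝ} (h : cmp3 x y = 0) : x < y := by
  by_cases hxy : x < y
  · exact hxy
  · exfalso
    by_cases he : x = y
    · rw [cmp3, if_neg hxy, if_pos he] at h; exact absurd h (by decide)
    · rw [cmp3, if_neg hxy, if_neg he] at h; exact absurd h (by decide)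

lemma cmp3_eq {x y : ℝ} (h : cmp3 x y = 1) : x = y := by
  by_cases hxy : x < y
  · rw [cmp3, if_pos hxy] at h; exact absurd h (by decide)
  · by_cases he : x = y
    · exact he
    · rw [cmp3, if_neg hxy, if_neg he] at h; exact absurd h (by decide)

lemma cmp3_gt {x y : ℝ} (h : cmp3 x y = 2) : y < x := by
  by_cases hxy : x < y
  · rw [cmp3, if_pos hxy] at h; exact absurd h (by decide)
  · by_cases he : x = y
    · rw [cmp3, if_neg hxy, if_pos he] at h; exact absurd h (by decide)
    · rcases lt_trichotomy x y with h' | h' | h'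
      · exact absurd h' hxy
      · exact absurd h' he
      · exact h'

/-- The coloring of `(k+1)`-subsets induced by `f` and a point `u`. -/
noncomputable def chi (k M : ℕ) (f : (Fin k → ℝ) → ℝ) (u : Fin M → ℝ) (T : Finset ℕ) : Fin 3 :=
  if hT : T.card = k + 1 ∧ T ⊆ Finset.range M then
    cmp3 (f fun j : Fin k => u ⟨T.orderEmbOfFin hT.1 j.castSucc,
            Finset.mem_range.mp (hT.2 (T.orderEmbOfFin_mem hT.1 j.castSucc))⟩)
         (f fun j : Fin k => u ⟨T.orderEmbOfFin hT.1 j.succ,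
            Finset.mem_range.mp (hT.2 (T.orderEmbOfFin_mem hT.1 j.succ))⟩)
  else 0

lemma chi_eval (k M : ℕ) (f : (Fin k → ℝ) → ℝ) (u : Fin M → ℝ)
    (g : Fin (k + 1) → ℕ) (hg : StrictMono g) (hgM : ∀ r, g r < M) :
    chi k M f u (Finset.image g Finset.univ) =
      cmp3 (f fun j : Fin k => u ⟨g j.castSucc, hgM _⟩)
           (f fun j : Fin k => u ⟨g j.succ, hgM _⟩) := by
  have hTcard : (Finset.image g Finset.univ).card = k + 1 := by
    rw [Finset.card_image_of_injective _ hg.injective, Finset.card_univ, Fintype.card_fin]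
  have hTsub : Finset.image g Finset.univ ⊆ Finset.range M := by
    intro x hx
    obtain ⟨r, -, rfl⟩ := Finset.mem_image.mp hx
    exact Finset.mem_range.mpr (hgM r)
  have hge : g = (Finset.image g Finset.univ).orderEmbOfFin hTcard :=
    Finset.orderEmbOfFin_unique hTcard
      (fun r => Finset.mem_image.mpr ⟨r, Finset.mem_univ r, rfl⟩) hg
  rw [chi, dif_pos ⟨hTcard, hTsub⟩]
  congr 1
  · exact congrArg f (funext fun j => congrArg u (Fin.ext (congrFun hge j.castSucc).symm))
  · exact congrArg f (funext fun j => congrArg u (Fin.ext (congrFun hge j.succ).symm))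

/-- Transitive consecutive relations propagate along `Fin L`. -/
lemma consec_trans {L : ℕ} (r : ℝ → ℝ → Prop) (htr : Transitive r) (g : Fin L → ℝ)
    (H : ∀ i : ℕ, ∀ h : i + 1 < L, r (g ⟨i, by omega⟩) (g ⟨i + 1, h⟩)) :
    ∀ a b : Fin L, a < b → r (g a) (g b) := by
  have key : ∀ n : ℕ, ∀ a b : Fin L, b.1 = a.1 + n + 1 → r (g a) (g b) := by
    intro n
    induction n with
    | zero =>
      intro a b hb
      have h1 : a.1 + 1 < L := by omega
      have hbe : b = ⟨a.1 + 1, h1⟩ := Fin.ext (show b.1 = a.1 + 1 by omega)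
      rw [hbe]
      exact H a.1 h1
    | succ n ihn =>
      intro a b hb
      have h1 : a.1 + n + 1 < L := by omega
      have h2 : a.1 + n + 1 + 1 < L := by omega
      have hb' : b = ⟨a.1 + n + 1 + 1, h2⟩ := Fin.ext (show b.1 = a.1 + n + 1 + 1 by omega)
      refine htr (ihn a ⟨a.1 + n + 1, h1⟩ rfl) ?_
      rw [hb']
      exact H (a.1 + n + 1) h2
  intro a b hab
  exact key (b.1 - a.1 - 1) a b (by have := (Fin.lt_def).mp hab; omega)

lemma mem_GSet (k ℓ : ℕ) (f : (Fin k → ℝ) → ℝ) (v : Fin (ℓ + k - 1) → ℝ) (a0 : Fin 3)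
    (key : ∀ i : ℕ, ∀ hi : i + 1 < ℓ,
      cmp3 (Zfun k ℓ f ⟨i, by omega⟩ v) (Zfun k ℓ f ⟨i + 1, hi⟩ v) = a0) :
    v ∈ GSet k ℓ f a0 := by
  obtain ⟨a0v, ha0⟩ := a0
  interval_cases a0v
  · show StrictMono fun i : Fin ℓ => Zfun k ℓ f i v
    intro a b hab
    exact consec_trans (· < ·) (fun _ _ _ => lt_trans) (fun i => Zfun k ℓ f i v)
      (fun i hi => cmp3_lt (key i hi)) a b hab
  · show ∀ i i' : Fin ℓ, Zfun k ℓ f i v = Zfun k ℓ f i' v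
    have hc := consec_trans (· = ·) (fun _ _ _ => Eq.trans) (fun i => Zfun k ℓ f i v)
      (fun i hi => cmp3_eq (key i hi))
    intro i i'
    rcases lt_trichotomy i i' with h | h | h
    · exact hc i i' h
    · rw [h]
    · exact (hc i' i h).symm
  · show StrictAnti fun i : Fin ℓ => Zfun k ℓ f i v
    intro a b hab
    exact consec_trans (fun x y => y < x) (fun _ _ _ h1 h2 => lt_trans h2 h1)
      (fun i => Zfun k ℓ f i v) (fun i hi => cmp3_gt (key i hi)) a b hab

lemma covering (k ℓ M : ℕ) (f : (Fin k → ℝ) → ℝ)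
    (hM : ∀ χ : Finset ℕ → Fin 3, ∃ S : Finset ℕ, S ⊆ Finset.range M ∧
      S.card = ℓ + k - 1 ∧ ∃ a : Fin 3, ∀ T ⊆ S, T.card = k + 1 → χ T = a)
    (u : Fin M → ℝ) :
    ∃ h0 : Fin (ℓ + k - 1) → Fin M, StrictMono h0 ∧
      ∃ c : Fin 3, (fun j => u (h0 j)) ∈ GSet k ℓ f c := by
  obtain ⟨S, hSsub, hScard, a0, hmono⟩ := hM (chi k M f u)
  have heM : ∀ r : Fin (ℓ + k - 1), S.orderEmbOfFin hScard r < M := fun r =>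
    Finset.mem_range.mp (hSsub (S.orderEmbOfFin_mem hScard r))
  refine ⟨fun r => ⟨S.orderEmbOfFin hScard r, heM r⟩, ?_, a0, ?_⟩
  · intro r r' hr
    exact Fin.mk_lt_mk.mpr ((S.orderEmbOfFin hScard).strictMono hr)
  apply mem_GSet
  intro i hi
  have hik : ∀ r : Fin (k + 1), i + r.1 < ℓ + k - 1 := fun r => by have := r.isLt; omega
  have hgmono : StrictMono (fun r : Fin (k + 1) => S.orderEmbOfFin hScard ⟨i + r.1, hik r⟩) := by
    intro r r' hr
    exact (S.orderEmbOfFin hScard).strictMono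
      (Fin.mk_lt_mk.mpr (by have := Fin.lt_def.mp hr; omega))
  have hgM : ∀ r : Fin (k + 1),
      (fun r : Fin (k + 1) => S.orderEmbOfFin hScard ⟨i + r.1, hik r⟩) r < M :=
    fun r => heM _
  have hTsubS : Finset.image (fun r : Fin (k + 1) =>
      S.orderEmbOfFin hScard ⟨i + r.1, hik r⟩) Finset.univ ⊆ S := by
    intro x hx
    obtain ⟨r, -, rfl⟩ := Finset.mem_image.mp hx
    exact S.orderEmbOfFin_mem hScard _
  have hTcard : (Finset.image (fun r : Fin (k + 1) =>
      S.orderEmbOfFin hScard ⟨i + r.1, hik r⟩) Finset.univ).card = k + 1 := by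
    rw [Finset.card_image_of_injective _ hgmono.injective, Finset.card_univ, Fintype.card_fin]
  have h1 := hmono _ hTsubS hTcard
  rw [chi_eval k M f u (fun r : Fin (k + 1) => S.orderEmbOfFin hScard ⟨i + r.1, hik r⟩)
      hgmono hgM] at h1
  rw [← h1]
  congr 1
  refine congrArg f (funext fun j => congrArg u (Fin.ext ?_))
  exact congrArg
    (fun z : Fin (ℓ + k - 1) => ((⟨S.orderEmbOfFin hScard z, heM z⟩ : Fin M) : ℕ))
    (Fin.ext (show i + 1 + j.1 = i + (j.1 + 1) by omega))

end AuxBlock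
/-- For every `k, ℓ ≥ 1` there exists `p > 0`, depending only on `k` and `ℓ`, such that
for every Borel-measurable `f : ℝ^k → ℝ`, the sliding-window process
`Z_i(u) = f(u_i, …, u_{i+k-1})` on `[0,1]^{ℓ+k-1}` is strictly increasing, constant, or
strictly decreasing on `i = 1, …, ℓ` with probability greater than `p`. -/
theorem monotone_run_of_block_factor (k ℓ : ℕ) (hk : 1 ≤ k) (hℓ : 1 ≤ ℓ) :
    ∃ p : ℝ≥0∞, 0 < p ∧
      ∀ f : (Fin k → ℝ) → ℝ, Measurable f →
        p < (Measure.pi fun _ : Fin (ℓ + k - 1) => (volume : Measure ℝ).restrict (Set.Icc 0 1))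
              {u | StrictMono fun i : Fin ℓ =>
                f fun j : Fin k => u ⟨i.1 + j.1, by have := i.isLt; have := j.isLt; omega⟩} ∨
        p < (Measure.pi fun _ : Fin (ℓ + k - 1) => (volume : Measure ℝ).restrict (Set.Icc 0 1))
              {u | ∀ i i' : Fin ℓ,
                (f fun j : Fin k => u ⟨i.1 + j.1, by have := i.isLt; have := j.isLt; omega⟩) =
                (f fun j : Fin k => u ⟨i'.1 + j.1, by have := i'.isLt; have := j.isLt; omega⟩)} ∨
        p < (Measure.pi fun _ : Fin (ℓ + k - 1) => (volume : Measure ℝ).restrict (Set.Icc 0 1))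
              {u | StrictAnti fun i : Fin ℓ =>
                f fun j : Fin k => u ⟨i.1 + j.1, by have := i.isLt; have := j.isLt; omega⟩} := by
  classical
  obtain ⟨M, hM⟩ := AuxRamsey.exists_ramsey k (ℓ + k - 1)
  haveI hPM : IsProbabilityMeasure ((volume : Measure ℝ).restrict (Set.Icc (0:ℝ) 1)) := by
    constructor
    rw [Measure.restrict_apply_univ, Real.volume_Icc]
    norm_num
  set B : ℕ := M ^ (ℓ + k - 1) with hB
  refine ⟨(((3 * B + 1 : ℕ) : ℝ≥0∞))⁻¹,
    ENNReal.inv_pos.mpr (ENNReal.natCast_ne_top _), fun f hf => ?_⟩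
  by_contra hcon
  push_neg at hcon
  obtain ⟨h1, h2, h3⟩ := hcon
  set μM := Measure.pi fun _ : Fin M => (volume : Measure ℝ).restrict (Set.Icc (0:ℝ) 1) with hμM
  set μN := Measure.pi fun _ : Fin (ℓ + k - 1) =>
    (volume : Measure ℝ).restrict (Set.Icc (0:ℝ) 1) with hμN
  -- the three target sets are bounded by p
  have hGle : ∀ c : Fin 3,
      μN (AuxBlock.GSet k ℓ f c) ≤ (((3 * B + 1 : ℕ) : ℝ≥0∞))⁻¹ := by
    intro c
    obtain ⟨cv, hcv⟩ := c
    interval_cases cv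
    · exact h1
    · exact h2
    · exact h3
  -- measurability of the Z functions and the target sets
  have hZm : ∀ i : Fin ℓ, Measurable fun v : Fin (ℓ + k - 1) → ℝ => AuxBlock.Zfun k ℓ f i v :=
    fun i => hf.comp (measurable_pi_lambda _ fun j => measurable_pi_apply _)
  have hGmeas : ∀ c : Fin 3, MeasurableSet (AuxBlock.GSet k ℓ f c) := by
    intro c
    obtain ⟨cv, hcv⟩ := c
    interval_cases cv
    · have he : AuxBlock.GSet k ℓ f ⟨0, hcv⟩ =
          ⋂ (a : Fin ℓ) (b : Fin ℓ) (_ : a < b),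
            {v | AuxBlock.Zfun k ℓ f a v < AuxBlock.Zfun k ℓ f b v} := by
        ext v
        simp only [Set.mem_iInter, Set.mem_setOf_eq]
        constructor
        · intro hv a b hab; exact hv hab
        · intro hv
          show StrictMono fun i : Fin ℓ => AuxBlock.Zfun k ℓ f i v
          intro a b hab; exact hv a b hab
      rw [he]
      exact MeasurableSet.iInter fun a => MeasurableSet.iInter fun b =>
        MeasurableSet.iInter fun _ => measurableSet_lt (hZm a) (hZm b)
    · have he : AuxBlock.GSet k ℓ f ⟨1, hcv⟩ =
          ⋂ (a : Fin ℓ) (b : Fin ℓ),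
            {v | AuxBlock.Zfun k ℓ f a v = AuxBlock.Zfun k ℓ f b v} := by
        ext v
        simp only [Set.mem_iInter, Set.mem_setOf_eq]
        constructor
        · intro hv a b; exact hv a b
        · intro hv
          show ∀ i i' : Fin ℓ, AuxBlock.Zfun k ℓ f i v = AuxBlock.Zfun k ℓ f i' v
          exact hv
      rw [he]
      exact MeasurableSet.iInter fun a => MeasurableSet.iInter fun b =>
        measurableSet_eq_fun (hZm a) (hZm b)
    · have he : AuxBlock.GSet k ℓ f ⟨2, hcv⟩ =
          ⋂ (a : Fin ℓ) (b : Fin ℓ) (_ : a < b),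
            {v | AuxBlock.Zfun k ℓ f b v < AuxBlock.Zfun k ℓ f a v} := by
        ext v
        simp only [Set.mem_iInter, Set.mem_setOf_eq]
        constructor
        · intro hv a b hab; exact hv hab
        · intro hv
          show StrictAnti fun i : Fin ℓ => AuxBlock.Zfun k ℓ f i v
          intro a b hab; exact hv a b hab
      rw [he]
      exact MeasurableSet.iInter fun a => MeasurableSet.iInter fun b =>
        MeasurableSet.iInter fun _ => measurableSet_lt (hZm b) (hZm a)
  -- the covering family
  set H : Finset (Fin (ℓ + k - 1) → Fin M) := Finset.univ.filter StrictMono with hH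
  have hcover : (Set.univ : Set (Fin M → ℝ)) ⊆
      ⋃ h0 ∈ H, ⋃ c : Fin 3,
        (fun (u : Fin M → ℝ) (j : Fin (ℓ + k - 1)) => u (h0 j)) ⁻¹' AuxBlock.GSet k ℓ f c := by
    intro u _
    obtain ⟨h0, hmon, c, hmem⟩ := AuxBlock.covering k ℓ M f hM u
    refine Set.mem_iUnion₂.mpr ⟨h0, Finset.mem_filter.mpr ⟨Finset.mem_univ _, hmon⟩, ?_⟩
    exact Set.mem_iUnion.mpr ⟨c, hmem⟩
  have hmapmeas : ∀ h0 : Fin (ℓ + k - 1) → Fin M,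
      Measurable fun (u : Fin M → ℝ) (j : Fin (ℓ + k - 1)) => u (h0 j) :=
    fun h0 => measurable_pi_lambda _ fun j => measurable_pi_apply (h0 j)
  have hmain : (1 : ℝ≥0∞) ≤ (H.card : ℝ≥0∞) * (3 * (((3 * B + 1 : ℕ) : ℝ≥0∞))⁻¹) := by
    calc (1 : ℝ≥0∞) = μM Set.univ := measure_univ.symm
      _ ≤ μM (⋃ h0 ∈ H, ⋃ c : Fin 3,
            (fun (u : Fin M → ℝ) (j : Fin (ℓ + k - 1)) => u (h0 j)) ⁻¹'
              AuxBlock.GSet k ℓ f c) := measure_mono hcover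
      _ ≤ ∑ h0 ∈ H, μM (⋃ c : Fin 3,
            (fun (u : Fin M → ℝ) (j : Fin (ℓ + k - 1)) => u (h0 j)) ⁻¹'
              AuxBlock.GSet k ℓ f c) := measure_biUnion_finset_le _ _
      _ ≤ ∑ h0 ∈ H, ∑ c : Fin 3, μM
            ((fun (u : Fin M → ℝ) (j : Fin (ℓ + k - 1)) => u (h0 j)) ⁻¹'
              AuxBlock.GSet k ℓ f c) :=
          Finset.sum_le_sum fun h0 _ => measure_iUnion_fintype_le _ _
      _ ≤ ∑ h0 ∈ H, ∑ _c : Fin 3, (((3 * B + 1 : ℕ) : ℝ≥0∞))⁻¹ := by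
          refine Finset.sum_le_sum fun h0 hh0 => Finset.sum_le_sum fun c _ => ?_
          have hmon : StrictMono h0 := (Finset.mem_filter.mp hh0).2
          calc μM ((fun (u : Fin M → ℝ) (j : Fin (ℓ + k - 1)) => u (h0 j)) ⁻¹'
                AuxBlock.GSet k ℓ f c)
              = (μM.map fun (u : Fin M → ℝ) (j : Fin (ℓ + k - 1)) => u (h0 j))
                  (AuxBlock.GSet k ℓ f c) :=
                (Measure.map_apply (hmapmeas h0) (hGmeas c)).symm
            _ = μN (AuxBlock.GSet k ℓ f c) := by
                rw [hμM, hμN, AuxMeas.map_comp_pi _ h0 hmon.injective]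
            _ ≤ _ := hGle c
      _ = (H.card : ℝ≥0∞) * (3 * (((3 * B + 1 : ℕ) : ℝ≥0∞))⁻¹) := by
          rw [Finset.sum_const, Finset.sum_const, Finset.card_univ, Fintype.card_fin,
            nsmul_eq_mul, nsmul_eq_mul]
          push_cast
          ring
  have hHle : (H.card : ℝ≥0∞) ≤ (B : ℝ≥0∞) := by
    have hcard : H.card ≤ B := by
      calc H.card ≤ (Finset.univ : Finset (Fin (ℓ + k - 1) → Fin M)).card :=
            Finset.card_filter_le _ _
        _ = B := by rw [Finset.card_univ, Fintype.card_fun, Fintype.card_fin, Fintype.card_fin]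
    exact_mod_cast hcard
  have hlt : (B : ℝ≥0∞) * (3 * (((3 * B + 1 : ℕ) : ℝ≥0∞))⁻¹) < 1 := by
    have heq : (B : ℝ≥0∞) * (3 * (((3 * B + 1 : ℕ) : ℝ≥0∞))⁻¹)
        = ((3 * B : ℕ) : ℝ≥0∞) / ((3 * B + 1 : ℕ) : ℝ≥0∞) := by
      rw [div_eq_mul_inv, ← mul_assoc]
      congr 1
      push_cast
      ring
    rw [heq, ENNReal.div_lt_iff (Or.inl (by simp : ((3 * B + 1 : ℕ) : ℝ≥0∞) ≠ 0))
      (Or.inl (ENNReal.natCast_ne_top _)), one_mul]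
    exact_mod_cast Nat.lt_succ_self _
  exact absurd (hmain.trans (mul_le_mul_left hHle _)) (not_le.mpr hlt)
end

section
/- For every k, ℓ, r ≥ 1 there exists p > 0 (depending only on k, ℓ and r) such that for every Borel-measurable function f : ℝ^k → {1,…,r} (formally f : (Fin k → ℝ) → Fin r), μ{u : Z_1(u) = Z_2(u) = … = Z_ℓ(u)} > p. -/
open MeasureTheory
open scoped ENNReal



open Finset

theorem my_ramsey (k r : ℕ) (hr : 1 ≤ r) :
    ∀ m : ℕ, ∃ n : ℕ, ∀ (α : Type) [LinearOrder α] (V : Finset α) (c : Finset α → Fin r),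
      n ≤ V.card → ∃ S ⊆ V, S.card = m ∧ ∃ col : Fin r,
        ∀ T ⊆ S, T.card = k → c T = col := by
  induction k with
  | zero =>
    intro m
    refine ⟨m, fun α _ V c hV => ?_⟩
    obtain ⟨S, hS, hcard⟩ := Finset.exists_subset_card_eq hV
    refine ⟨S, hS, hcard, c ∅, fun T _ hT => ?_⟩
    rw [Finset.card_eq_zero.mp hT]
  | succ k IH =>
    -- inner claim
    have inner : ∀ s : ℕ, ∃ n : ℕ, ∀ (α : Type) [LinearOrder α] (V : Finset α)
        (c : Finset α → Fin r), n ≤ V.card →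
        ∃ A ⊆ V, A.card = s ∧ ∃ d : α → Fin r, ∀ a ∈ A, ∀ T ⊆ A, T.card = k →
          (∀ t ∈ T, a < t) → c (insert a T) = d a := by
      intro s
      induction s with
      | zero =>
        exact ⟨0, fun α _ V c _ => ⟨∅, Finset.empty_subset _, rfl, fun _ => ⟨0, hr⟩,
          by simp⟩⟩
      | succ s ihs =>
        obtain ⟨ns, hs⟩ := ihs
        obtain ⟨nk, hk⟩ := IH ns
        refine ⟨nk + 1, fun α _ V c hV => ?_⟩
        have hne : V.Nonempty := Finset.card_pos.mp (by omega)
        set a := V.min' hne with ha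
        have hVe : nk ≤ (V.erase a).card := by
          rw [Finset.card_erase_of_mem (V.min'_mem hne)]; omega
        obtain ⟨W, hWsub, hWcard, cola, hW⟩ :=
          hk α (V.erase a) (fun T => c (insert a T)) hVe
        obtain ⟨A', hA'sub, hA'card, d', hd'⟩ := hs α W c (le_of_eq hWcard.symm)
        have haA' : a ∉ A' := fun h =>
          Finset.notMem_erase a V (hWsub (hA'sub h))
        have haltA' : ∀ b ∈ A', a < b := by
          intro b hb
          have hbV : b ∈ V.erase a := hWsub (hA'sub hb)
          exact lt_of_le_of_ne (V.min'_le b (Finset.mem_of_mem_erase hbV))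
            (Ne.symm (Finset.ne_of_mem_erase hbV))
        refine ⟨insert a A', ?_, ?_, fun x => if x = a then cola else d' x, ?_⟩
        · exact Finset.insert_subset (V.min'_mem hne)
            (hA'sub.trans (hWsub.trans (Finset.erase_subset _ _)))
        · rw [Finset.card_insert_of_notMem haA', hA'card]
        · intro b hb T hT hTcard hlt
          rcases Finset.mem_insert.mp hb with rfl | hbA'
          · simp only [if_pos rfl]
            refine hW T ?_ hTcard
            intro t ht
            rcases Finset.mem_insert.mp (hT ht) with heq | h
            · exact absurd (heq ▸ hlt t ht) (lt_irrefl a)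
            · exact hA'sub h
          · have hba : b ≠ a := fun h => absurd (haltA' b hbA') (h ▸ lt_irrefl a)
            simp only [if_neg hba]
            refine hd' b hbA' T ?_ hTcard hlt
            intro t ht
            rcases Finset.mem_insert.mp (hT ht) with heq | h
            · exact absurd (heq ▸ hlt t ht) (not_lt.mpr (le_of_lt (haltA' b hbA')))
            · exact h
    intro m
    obtain ⟨ns, hs⟩ := inner (r * m + 1)
    refine ⟨ns, fun α _ V c hV => ?_⟩
    obtain ⟨A, hAsub, hAcard, d, hd⟩ := hs α V c hV
    have hpig : ∃ y ∈ (Finset.univ : Finset (Fin r)), m <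
        (A.filter fun a => d a = y).card := by
      apply Finset.exists_lt_card_fiber_of_mul_lt_card_of_maps_to
        (fun a _ => Finset.mem_univ (d a))
      rw [hAcard, Finset.card_univ, Fintype.card_fin]; omega
    obtain ⟨y, -, hy⟩ := hpig
    obtain ⟨S, hSsub, hScard⟩ := Finset.exists_subset_card_eq (le_of_lt hy)
    refine ⟨S, (hSsub.trans (Finset.filter_subset _ _)).trans hAsub, hScard, y, ?_⟩
    intro T hTS hTcard
    have hTne : T.Nonempty := Finset.card_pos.mp (by omega)
    set a := T.min' hTne with ha
    have haT : a ∈ T := T.min'_mem hTne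
    have haS : a ∈ S := hTS haT
    have haF := hSsub haS
    rw [Finset.mem_filter] at haF
    have key : c (insert a (T.erase a)) = d a := by
      refine hd a haF.1 (T.erase a) ?_ ?_ ?_
      · exact ((T.erase_subset a).trans hTS).trans
          ((hSsub.trans (Finset.filter_subset _ _)))
      · rw [Finset.card_erase_of_mem haT, hTcard]; omega
      · intro t ht
        exact lt_of_le_of_ne (T.min'_le t (Finset.mem_of_mem_erase ht))
          (Ne.symm (Finset.ne_of_mem_erase ht))
    rw [Finset.insert_erase haT] at key
    rw [key, haF.2]


open MeasureTheory
open scoped ENNReal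

lemma pi_map_comp {N n : ℕ} (e : Fin N → Fin n) (he : Function.Injective e)
    (ν : Measure ℝ) [IsProbabilityMeasure ν] :
    Measure.map (fun v : Fin n → ℝ => v ∘ e) (Measure.pi fun _ : Fin n => ν)
      = Measure.pi fun _ : Fin N => ν := by
  classical
  refine (Measure.pi_eq (μ := fun _ : Fin N => ν) (fun s hs => ?_)).symm
  have hmeas : Measurable (fun v : Fin n → ℝ => v ∘ e) :=
    measurable_pi_lambda _ fun i => measurable_pi_apply (e i)
  rw [Measure.map_apply hmeas (MeasurableSet.univ_pi hs)]
  set t : Fin n → Set ℝ := fun j => if h : ∃ i, e i = j then s h.choose else Set.univ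
    with ht
  have hpre : (fun v : Fin n → ℝ => v ∘ e) ⁻¹' Set.pi Set.univ s = Set.pi Set.univ t := by
    ext v
    simp only [Set.mem_preimage, Set.mem_pi, Set.mem_univ, true_imp_iff, Function.comp]
    constructor
    · intro hv j
      by_cases h : ∃ i, e i = j
      · rw [ht]; simp only [dif_pos h]
        have h2 := hv h.choose
        rwa [h.choose_spec] at h2
      · rw [ht]; simp only [dif_neg h]; trivial
    · intro hv i
      have h : ∃ i', e i' = e i := ⟨i, rfl⟩
      have hc : h.choose = i := he h.choose_spec
      have := hv (e i)
      rw [ht] at this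
      simp only [dif_pos h, hc] at this
      exact this
  rw [hpre, Measure.pi_pi]
  have htm : ∀ j, ν (t j) = if h : ∃ i, e i = j then ν (s h.choose) else 1 := by
    intro j
    by_cases h : ∃ i, e i = j
    · simp [ht, dif_pos h]
    · simp [ht, dif_neg h]
  have step1 : ∏ j : Fin n, ν (t j) = ∏ j ∈ Finset.image e Finset.univ, ν (t j) := by
    refine (Finset.prod_subset (Finset.subset_univ _) ?_).symm
    intro j _ hj
    have h : ¬ ∃ i, e i = j := by
      intro ⟨i, hi⟩
      exact hj (Finset.mem_image.mpr ⟨i, Finset.mem_univ i, hi⟩)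
    rw [htm j, dif_neg h]
  rw [step1, Finset.prod_image (fun i _ i' _ h => he h)]
  refine Finset.prod_congr rfl fun i _ => ?_
  have h : ∃ i', e i' = e i := ⟨i, rfl⟩
  have hc : h.choose = i := he h.choose_spec
  rw [htm (e i), dif_pos h, hc]

/-- For every `k, ℓ, r ≥ 1` there exists `p > 0`, depending only on `k`, `ℓ` and `r`,
such that for every Borel-measurable `f : ℝ^k → {1,…,r}`, the sliding-window process
`Z_i(u) = f(u_i, …, u_{i+k-1})` on `[0,1]^{ℓ+k-1}` is constant on `i = 1, …, ℓ`
with probability greater than `p`. -/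
theorem constant_run_of_finite_block_factor (k ℓ r : ℕ) (hk : 1 ≤ k) (hℓ : 1 ≤ ℓ)
    (hr : 1 ≤ r) :
    ∃ p : ℝ≥0∞, 0 < p ∧
      ∀ f : (Fin k → ℝ) → Fin r, Measurable f →
        p < (Measure.pi fun _ : Fin (ℓ + k - 1) => (volume : Measure ℝ).restrict (Set.Icc 0 1))
              {u | ∀ i i' : Fin ℓ,
                (f fun j : Fin k => u ⟨i.1 + j.1, by have := i.isLt; have := j.isLt; omega⟩) =
                (f fun j : Fin k => u ⟨i'.1 + j.1, by have := i'.isLt; have := j.isLt; omega⟩)} := by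
  
  classical
  obtain ⟨n, hn⟩ := my_ramsey k r hr (ℓ + k - 1)
  set ν := (volume : Measure ℝ).restrict (Set.Icc 0 1) with hν
  have hprob : IsProbabilityMeasure ν := ⟨by simp [hν, Real.volume_Icc]⟩
  set M := Fintype.card (Finset (Fin n)) with hM
  have hM0 : (M : ℝ≥0∞) ≠ 0 := by
    simp [hM, Fintype.card_ne_zero]
  have hMtop : (M : ℝ≥0∞) ≠ ⊤ := ENNReal.natCast_ne_top M
  refine ⟨((M : ℝ≥0∞) + 1)⁻¹, ENNReal.inv_pos.mpr (by simp [hMtop]), ?_⟩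
  intro f hf
  set W : Fin ℓ → (Fin (ℓ + k - 1) → ℝ) → Fin r :=
    fun i u => f fun j : Fin k => u ⟨i.1 + j.1, by have := i.isLt; have := j.isLt; omega⟩
    with hWdef
  suffices h : ((M : ℝ≥0∞) + 1)⁻¹ <
      (Measure.pi fun _ : Fin (ℓ + k - 1) => ν)
        {u : Fin (ℓ + k - 1) → ℝ | ∀ i i' : Fin ℓ, W i u = W i' u} by exact h
  set B : Set (Fin (ℓ + k - 1) → ℝ) := {u | ∀ i i' : Fin ℓ, W i u = W i' u} with hB
  have hWm : ∀ i, Measurable (W i) :=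
    fun i => hf.comp (measurable_pi_lambda _ fun j => measurable_pi_apply _)
  have hBmeas : MeasurableSet B := by
    have hrw : B = ⋂ i, ⋂ i', ⋃ c : Fin r, (W i ⁻¹' {c}) ∩ (W i' ⁻¹' {c}) := by
      ext u
      simp only [hB, Set.mem_iInter, Set.mem_iUnion, Set.mem_inter_iff, Set.mem_preimage,
        Set.mem_singleton_iff, Set.mem_setOf_eq]
      constructor
      · intro h i i'
        exact ⟨W i' u, h i i', rfl⟩
      · intro h i i'
        obtain ⟨c, h1, h2⟩ := h i i'
        rw [h1, h2]
    rw [hrw]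
    exact MeasurableSet.iInter fun i => MeasurableSet.iInter fun i' =>
      MeasurableSet.iUnion fun c =>
        ((hWm i (measurableSet_singleton c)).inter (hWm i' (measurableSet_singleton c)))
  set c : (Fin n → ℝ) → Finset (Fin n) → Fin r := fun v T =>
    if hT : T.card = k then f (fun j => v (T.orderEmbOfFin hT j)) else ⟨0, hr⟩ with hc
  set E : Finset (Fin n) → Set (Fin n → ℝ) := fun S =>
    if hS : S.card = ℓ + k - 1 then (fun v => v ∘ (S.orderEmbOfFin hS)) ⁻¹' B else ∅
    with hE
  have hcover : (Set.univ : Set (Fin n → ℝ)) ⊆ ⋃ S : Finset (Fin n), E S := by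
    intro v _
    obtain ⟨S, hSsub, hScard, col, hcol⟩ := hn (Fin n) Finset.univ (c v) (by simp)
    refine Set.mem_iUnion.mpr ⟨S, ?_⟩
    have hmem : (v ∘ S.orderEmbOfFin hScard) ∈ B := by
      have hwin : ∀ i : Fin ℓ, W i (v ∘ S.orderEmbOfFin hScard) = col := by
        intro i
        set g : Fin k → Fin n := fun j =>
          S.orderEmbOfFin hScard ⟨i.1 + j.1, by have := i.isLt; have := j.isLt; omega⟩
          with hg
        have hgm : StrictMono g := fun j j' hj =>
          (S.orderEmbOfFin hScard).strictMono (Fin.mk_lt_mk.mpr (Nat.add_lt_add_left hj i.1))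
        set T : Finset (Fin n) := Finset.image g Finset.univ with hT
        have hTcard : T.card = k := by
          rw [hT, Finset.card_image_of_injective _ hgm.injective, Finset.card_univ,
            Fintype.card_fin]
        have hTS : T ⊆ S := by
          intro x hx
          obtain ⟨j, -, rfl⟩ := Finset.mem_image.mp hx
          exact Finset.orderEmbOfFin_mem S hScard _
        have h1 := hcol T hTS hTcard
        have h2 : c v T = f (fun j => v (T.orderEmbOfFin hTcard j)) := dif_pos hTcard
        have h3 : g = T.orderEmbOfFin hTcard :=
          Finset.orderEmbOfFin_unique hTcard
            (fun x => Finset.mem_image_of_mem g (Finset.mem_univ x)) hgm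
        calc W i (v ∘ S.orderEmbOfFin hScard) = f (fun j => v (g j)) := rfl
          _ = f (fun j => v (T.orderEmbOfFin hTcard j)) := by rw [h3]
          _ = c v T := h2.symm
          _ = col := h1
      intro i i'
      rw [hwin i, hwin i']
    have : E S = (fun v => v ∘ (S.orderEmbOfFin hScard)) ⁻¹' B := by
      rw [hE]; exact dif_pos hScard
    rw [this]
    exact hmem
  have hES : ∀ S : Finset (Fin n),
      (Measure.pi fun _ : Fin n => ν) (E S) ≤ (Measure.pi fun _ : Fin (ℓ + k - 1) => ν) B := by
    intro S
    by_cases hS : S.card = ℓ + k - 1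
    · have hEeq : E S = (fun v => v ∘ (S.orderEmbOfFin hS)) ⁻¹' B := by
        rw [hE]; exact dif_pos hS
      have hmeas : Measurable (fun v : Fin n → ℝ => v ∘ (S.orderEmbOfFin hS)) :=
        measurable_pi_lambda _ fun i => measurable_pi_apply _
      rw [hEeq, ← Measure.map_apply hmeas hBmeas,
        pi_map_comp _ (S.orderEmbOfFin hS).injective ν]
    · have hEeq : E S = ∅ := by rw [hE]; exact dif_neg hS
      rw [hEeq]
      simp
  have hsum : (1 : ℝ≥0∞) ≤ (M : ℝ≥0∞) * (Measure.pi fun _ : Fin (ℓ + k - 1) => ν) B := by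
    calc (1 : ℝ≥0∞) = (Measure.pi fun _ : Fin n => ν) Set.univ := measure_univ.symm
      _ ≤ (Measure.pi fun _ : Fin n => ν) (⋃ S : Finset (Fin n), E S) := measure_mono hcover
      _ ≤ ∑' S : Finset (Fin n), (Measure.pi fun _ : Fin n => ν) (E S) := measure_iUnion_le _
      _ ≤ ∑' _ : Finset (Fin n), (Measure.pi fun _ : Fin (ℓ + k - 1) => ν) B :=
          ENNReal.tsum_le_tsum hES
      _ = (M : ℝ≥0∞) * (Measure.pi fun _ : Fin (ℓ + k - 1) => ν) B := by
          rw [tsum_fintype]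
          simp [Finset.sum_const, nsmul_eq_mul, hM]
  have hinv : ((M : ℝ≥0∞))⁻¹ ≤ (Measure.pi fun _ : Fin (ℓ + k - 1) => ν) B := by
    calc (M : ℝ≥0∞)⁻¹ = (M : ℝ≥0∞)⁻¹ * 1 := (mul_one _).symm
      _ ≤ (M : ℝ≥0∞)⁻¹ * ((M : ℝ≥0∞) * (Measure.pi fun _ : Fin (ℓ + k - 1) => ν) B) :=
          mul_le_mul_right hsum _
      _ = (Measure.pi fun _ : Fin (ℓ + k - 1) => ν) B := by
          rw [← mul_assoc, ENNReal.inv_mul_cancel hM0 hMtop, one_mul]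
  refine lt_of_lt_of_le ?_ hinv
  refine ENNReal.inv_lt_inv.mpr ?_
  exact ENNReal.lt_add_right hMtop one_ne_zero
end

section
/- For all k ≥ 2 and m, q ≥ 1: if the increasing de Bruijn graph D(k,m) admits a proper vertex coloring with q colors, then m ≤ t_k(q), i.e., m is at most the value obtained from q by applying the map x ↦ 2^x exactly (k−1) times. (Equivalently, χ(D(k,m)) ≥ log₂^{(k−1)}(m).) -/
/-- A vertex of the increasing `k`-dimensional de Bruijn graph of `m` symbols:
a strictly increasing sequence of length `k` with entries in `{1,…,m}`. -/
def DeBruijnVertex (k m : ℕ) : Type := {a : Fin k → Fin m // StrictMono a}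

/-- The edge relation of the increasing de Bruijn graph `D(k,m)`: there is a directed edge
from `a` to `b` iff `b i = a (i+1)` for all `i ∈ {1,…,k-1}`. -/
def deBruijnAdj {k m : ℕ} (a b : DeBruijnVertex k m) : Prop :=
  ∀ i : Fin (k - 1),
    b.1 ⟨i.1, by have := i.isLt; omega⟩ = a.1 ⟨i.1 + 1, by have := i.isLt; omega⟩

/-- Extend an increasing sequence by one larger element at the end. -/
def dbExtend {n m : ℕ} (a : DeBruijnVertex (n + 1) m) (x : Fin m)
    (h : a.1 (Fin.last n) < x) : DeBruijnVertex (n + 2) m :=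
  ⟨Fin.snoc a.1 x, by
    intro i j hij
    rcases Fin.eq_castSucc_or_eq_last j with ⟨j', rfl⟩ | rfl
    · rcases Fin.eq_castSucc_or_eq_last i with ⟨i', rfl⟩ | rfl
      · rw [Fin.snoc_castSucc, Fin.snoc_castSucc]
        exact a.2 (by exact_mod_cast hij)
      · exact absurd (lt_of_lt_of_le hij (Fin.le_last _)) (lt_irrefl _)
    · rcases Fin.eq_castSucc_or_eq_last i with ⟨i', rfl⟩ | rfl
      · rw [Fin.snoc_castSucc, Fin.snoc_last]
        exact lt_of_le_of_lt (a.2.monotone (Fin.le_last i')) h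
      · exact absurd hij (lt_irrefl _)⟩

lemma dbExtend_apply_castSucc {n m : ℕ} (a : DeBruijnVertex (n + 1) m) (x : Fin m)
    (h : a.1 (Fin.last n) < x) (i : Fin (n + 1)) :
    (dbExtend a x h).1 (Fin.castSucc i) = a.1 i := by
  simp [dbExtend]

lemma dbExtend_apply_last {n m : ℕ} (a : DeBruijnVertex (n + 1) m) (x : Fin m)
    (h : a.1 (Fin.last n) < x) :
    (dbExtend a x h).1 (Fin.last (n + 1)) = x := by
  simp [dbExtend]

lemma dbExtend_adj {n m : ℕ} (a b : DeBruijnVertex (n + 2) m) (hab : deBruijnAdj a b)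
    (ha : a.1 (Fin.last (n + 1)) < b.1 (Fin.last (n + 1)))
    (x : Fin m) (hx : b.1 (Fin.last (n + 1)) < x) :
    deBruijnAdj (dbExtend a (b.1 (Fin.last (n + 1))) ha) (dbExtend b x hx) := by
  intro i
  have hi : i.1 < n + 2 := i.isLt
  have hL : (⟨i.1, by omega⟩ : Fin (n + 3)) = Fin.castSucc ⟨i.1, hi⟩ := Fin.ext rfl
  rw [hL, dbExtend_apply_castSucc]
  by_cases hlast : i.1 = n + 1
  · have hR : (⟨i.1 + 1, by omega⟩ : Fin (n + 3)) = Fin.last (n + 2) :=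
      Fin.ext (by simp [hlast])
    rw [hR, dbExtend_apply_last,
      show (⟨i.1, hi⟩ : Fin (n + 2)) = Fin.last (n + 1) from Fin.ext (by simp [hlast])]
  · have hi' : i.1 + 1 < n + 2 := by omega
    have hR : (⟨i.1 + 1, by omega⟩ : Fin (n + 3)) = Fin.castSucc ⟨i.1 + 1, hi'⟩ :=
      Fin.ext rfl
    rw [hR, dbExtend_apply_castSucc]
    exact hab ⟨i.1, by omega⟩

/-- The pair function for the base case. -/
def dbPair {m : ℕ} (i j : Fin m) (h : i < j) : DeBruijnVertex 2 m :=
  ⟨fun t => if t.1 = 0 then i else j, by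
    intro s t hst
    have hs := s.isLt
    have ht := t.isLt
    have hst' : s.1 < t.1 := hst
    have h1 : s.1 = 0 := by omega
    have h2 : t.1 = 1 := by omega
    simp [h1, h2, h]⟩

lemma db_main : ∀ (k : ℕ) (m : ℕ) (C : Type) [Fintype C]
    (c : DeBruijnVertex (k + 2) m → C)
    (_ : ∀ a b : DeBruijnVertex (k + 2) m, deBruijnAdj a b → c a ≠ c b),
    m ≤ (fun x => 2 ^ x)^[k + 1] (Fintype.card C) := by
  intro k
  induction k with
  | zero =>
    intro m C _ c hc
    classical
    set S : Fin m → Finset C := fun i =>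
      Finset.univ.filter (fun col => ∃ j : Fin m, ∃ h : i < j, c (dbPair i j h) = col)
      with hS
    have hSinj : Function.Injective S := by
      have key : ∀ i j : Fin m, i < j → S i ≠ S j := by
        intro i j hij heq
        have hmem : c (dbPair i j hij) ∈ S i := by
          simp only [hS, Finset.mem_filter, Finset.mem_univ, true_and]
          exact ⟨j, hij, rfl⟩
        rw [heq] at hmem
        simp only [hS, Finset.mem_filter, Finset.mem_univ, true_and] at hmem
        obtain ⟨l, hjl, hcl⟩ := hmem
        refine hc (dbPair i j hij) (dbPair j l hjl) ?_ hcl.symm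
        intro t
        have ht : t.1 = 0 := by omega
        simp [dbPair, ht]
      intro i j hij
      by_contra hne
      rcases lt_or_gt_of_ne hne with h | h
      · exact key i j h hij
      · exact key j i h hij.symm
    have := Fintype.card_le_of_injective S hSinj
    simpa [Fintype.card_finset] using this
  | succ k ih =>
    intro m C _ c hc
    classical
    set c' : DeBruijnVertex (k + 2) m → Finset C := fun a =>
      Finset.univ.filter (fun col => ∃ x : Fin m, ∃ h : a.1 (Fin.last (k + 1)) < x,
        c (dbExtend a x h) = col) with hc'def
    have hc' : ∀ a b : DeBruijnVertex (k + 2) m, deBruijnAdj a b → c' a ≠ c' b := by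
      intro a b hab heq
      have ha : a.1 (Fin.last (k + 1)) < b.1 (Fin.last (k + 1)) := by
        have h1 := hab ⟨k, by omega⟩
        have h2 : b.1 ⟨k, by omega⟩ < b.1 (Fin.last (k + 1)) :=
          b.2 (show (⟨k, by omega⟩ : Fin (k + 2)) < Fin.last (k + 1) by
            simp [Fin.lt_def])
        have h4 : (⟨k + 1, by omega⟩ : Fin (k + 2)) = Fin.last (k + 1) := Fin.ext (by simp)
        rw [h4] at h1
        rw [← h1]; exact h2
      have hmem : c (dbExtend a (b.1 (Fin.last (k + 1))) ha) ∈ c' a := by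
        simp only [hc'def, Finset.mem_filter, Finset.mem_univ, true_and]
        exact ⟨_, ha, rfl⟩
      rw [heq] at hmem
      simp only [hc'def, Finset.mem_filter, Finset.mem_univ, true_and] at hmem
      obtain ⟨x, hx, hcx⟩ := hmem
      exact hc _ _ (dbExtend_adj a b hab ha x hx) hcx.symm
    have hle := ih m (Finset C) c' hc'
    rw [Fintype.card_finset] at hle
    rw [show k + 1 + 1 = (k + 1) + 1 from rfl, Function.iterate_succ_apply]
    exact hle

/-- If the increasing de Bruijn graph `D(k,m)` (for `k ≥ 2`) admits a proper vertex
coloring with `q` colors, then `m ≤ t_k(q)`, the tower of `2`s of height `k-1` over `q`.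
Equivalently, `χ(D(k,m)) ≥ log₂^{(k-1)}(m)`. -/
theorem deBruijn_chromatic_lower_bound (k m q : ℕ) (hk : 2 ≤ k) (hm : 1 ≤ m) (hq : 1 ≤ q)
    (c : DeBruijnVertex k m → Fin q)
    (hc : ∀ a b : DeBruijnVertex k m, deBruijnAdj a b → c a ≠ c b) :
    m ≤ (fun x => 2 ^ x)^[k - 1] q := by
  obtain ⟨k', rfl⟩ : ∃ k', k = k' + 2 := ⟨k - 2, by omega⟩
  have := db_main k' m (Fin q) c hc
  simpa using this
end

section
/- There exists k₀ ∈ ℕ such that for every k ≥ k₀ there exists a vertex 2-coloring g (a map from vertices to Bool) of the increasing de Bruijn graph D(k, M), where M = t_{k−2}(⌊k/√8⌋) (i.e., M is obtained from ⌊k/√8⌋ by applying the map x ↦ 2^x exactly (k−3) times), such that no directed path with k vertices is monochromatic: there are no distinct vertices a^{(1)}, …, a^{(k)} with a directed edge from a^{(j)} to a^{(j+1)} for each j and g(a^{(1)}) = … = g(a^{(k)}). -/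
/-!
The colouring is the stepping-down construction of Erdős, Hajnal and Rado. For `a ≠ b` let
`stepDown a b = 2 δ + [a < b]`, where `δ` is the most significant bit in which `a` and `b` differ.
It maps two numbers below `2 ^ t` to a number below `2 t`, and `stepDown a b ≠ stepDown b c`
whenever `a ≠ b ≠ c`: equal values would force `a < b < c` or `a > b > c` with the same top
differing bit, which `b` would have to both contain and miss. Applying it to consecutive terms
`k - 3` times turns a vertex of `D(k, M)`, whose entries lie below the tower `M`, into a sequence
whose first terms `z₀ ≠ z₁` lie below `2 ⌊k/√8⌋ + 4`; the vertex is coloured by `z₀ < z₁`.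
Along an edge, `z₁` of a vertex is `z₀` of the next one, so on a monochromatic path with `k`
vertices the values `z₀` are strictly monotone, and `k` of them cannot fit below
`2 ⌊k/√8⌋ + 4 < k`.
-/

lemma Nat.testBit_eq_of_log2_xor_lt {a b j : ℕ} (hj : (a ^^^ b).log2 < j) :
    a.testBit j = b.testBit j := by
  have hlt : a ^^^ b < 2 ^ j :=
    Nat.lt_log2_self.trans_le (Nat.pow_le_pow_right two_pos hj)
  have h := Nat.testBit_lt_two_pow hlt
  rw [Nat.testBit_xor] at h
  simpa using h

lemma Nat.testBit_log2_xor_of_lt {a b : ℕ} (h : a < b) :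
    a.testBit (a ^^^ b).log2 = false ∧ b.testBit (a ^^^ b).log2 = true := by
  have hxor : a ^^^ b ≠ 0 := fun h0 => h.ne (xor_eq_zero_iff.1 h0)
  have htop := Nat.testBit_log2 hxor
  rw [Nat.testBit_xor] at htop
  cases ha : a.testBit (a ^^^ b).log2 <;> cases hb : b.testBit (a ^^^ b).log2 <;>
    simp only [ha, hb, Bool.xor_self, Bool.false_eq_true] at htop
  · exact ⟨rfl, rfl⟩
  · exact absurd (Nat.lt_of_testBit _ hb ha fun j hj => (Nat.testBit_eq_of_log2_xor_lt hj).symm)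
      h.not_gt

def stepDown (a b : ℕ) : ℕ := 2 * (a ^^^ b).log2 + if a < b then 1 else 0

lemma stepDown_ne_stepDown {a b c : ℕ} (hab : a ≠ b) (hbc : b ≠ c) :
    stepDown a b ≠ stepDown b c := by
  intro h
  obtain ⟨hbit, hdir⟩ : (a ^^^ b).log2 = (b ^^^ c).log2 ∧ (a < b ↔ b < c) := by
    unfold stepDown at h
    split_ifs at h <;> omega
  rcases hab.lt_or_gt with hab | hba
  · have h₁ := (Nat.testBit_log2_xor_of_lt hab).2
    rw [hbit, (Nat.testBit_log2_xor_of_lt (hdir.1 hab)).1] at h₁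
    exact Bool.false_ne_true h₁
  · have hcb : c < b := by omega
    have h₁ := (Nat.testBit_log2_xor_of_lt hba).1
    rw [Nat.xor_comm, hbit, Nat.xor_comm, (Nat.testBit_log2_xor_of_lt hcb).2] at h₁
    exact Bool.false_ne_true h₁.symm

lemma stepDown_lt {a b t : ℕ} (ha : a < 2 ^ t) (hb : b < 2 ^ t) (hab : a ≠ b) :
    stepDown a b < 2 * t := by
  have hxor : a ^^^ b ≠ 0 := fun h0 => hab (xor_eq_zero_iff.1 h0)
  have hlog : (a ^^^ b).log2 < t := (Nat.log2_lt hxor).2 (Nat.xor_lt_two_pow ha hb)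
  unfold stepDown
  split_ifs <;> omega

def stepDownSeq (s : ℕ → ℕ) (i : ℕ) : ℕ := stepDown (s i) (s (i + 1))

section stepDownSeq

variable {n : ℕ} {s : ℕ → ℕ}

lemma stepDownSeq_ne (hs : ∀ i < n, s i ≠ s (i + 1)) :
    ∀ i < n - 1, stepDownSeq s i ≠ stepDownSeq s (i + 1) :=
  fun i _ => stepDown_ne_stepDown (hs i (by omega)) (hs (i + 1) (by omega))

lemma stepDownSeq_lt {t : ℕ} (hs : ∀ i < n, s i ≠ s (i + 1)) (hb : ∀ i ≤ n, s i < 2 ^ t)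
    {i : ℕ} (hi : i < n) : stepDownSeq s i < 2 * t :=
  stepDown_lt (hb i hi.le) (hb (i + 1) hi) (hs i hi)

lemma iterate_stepDownSeq_congr (r : ℕ) {s' : ℕ → ℕ} {i i' : ℕ}
    (h : ∀ t ≤ r, s (i + t) = s' (i' + t)) : stepDownSeq^[r] s i = stepDownSeq^[r] s' i' := by
  induction r generalizing s s' with
  | zero => exact h 0 le_rfl
  | succ r ih =>
    refine ih fun t ht => ?_
    simp only [stepDownSeq]
    rw [h t (by omega), add_assoc i, add_assoc i', h (t + 1) (by omega)]

lemma iterate_stepDownSeq_ne (hs : ∀ i < n, s i ≠ s (i + 1)) (r : ℕ) {i : ℕ}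
    (hi : i + r < n) : stepDownSeq^[r] s i ≠ stepDownSeq^[r] s (i + 1) := by
  induction r generalizing n s with
  | zero => exact hs i hi
  | succ r ih => exact ih (stepDownSeq_ne hs) (by omega)

lemma two_mul_iterate_two_pow_add_two_le {m : ℕ} (hm : 1 ≤ m) (r : ℕ) :
    2 * ((2 ^ ·)^[r + 1] m + 2) ≤ 2 ^ ((2 ^ ·)^[r] m + 2) := by
  have hT : 1 ≤ (2 ^ ·)^[r] m := by
    cases r with
    | zero => exact hm
    | succ r => rw [Function.iterate_succ_apply']; exact Nat.one_le_two_pow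
  have h2 : 2 ≤ 2 ^ (2 ^ ·)^[r] m := by simpa using Nat.pow_le_pow_right two_pos hT
  simp only [Function.iterate_succ_apply', pow_succ]
  omega

lemma iterate_stepDownSeq_lt {m : ℕ} (hm : 1 ≤ m) (r : ℕ) (hs : ∀ i < n, s i ≠ s (i + 1))
    (hb : ∀ i ≤ n, s i < 2 ^ ((2 ^ ·)^[r] m + 2)) {i : ℕ} (hi : i + r < n) :
    stepDownSeq^[r + 1] s i < 2 * m + 4 := by
  induction r generalizing n s with
  | zero => simpa [mul_add] using stepDownSeq_lt hs hb hi
  | succ r ih =>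
    refine ih (stepDownSeq_ne hs) (fun j hj => ?_) (by omega)
    exact (stepDownSeq_lt hs hb (by omega)).trans_le (two_mul_iterate_two_pow_add_two_le hm r)

end stepDownSeq

lemma le_of_increasing_chain_lt {k B : ℕ} {u : Fin k → ℕ} (hB : ∀ i, u i < B)
    (hu : ∀ i : Fin (k - 1), u ⟨i.1, by omega⟩ < u ⟨i.1 + 1, by omega⟩) : k ≤ B := by
  have hge : ∀ j (hj : j < k), j ≤ u ⟨j, hj⟩ := by
    intro j
    induction j with
    | zero => simp
    | succ j ih =>
      intro hj
      have hstep := hu ⟨j, by omega⟩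
      dsimp only at hstep
      have := ih (by omega)
      omega
  rcases k with _ | k
  · exact Nat.zero_le B
  · have := hge k (by omega)
    have := hB ⟨k, by omega⟩
    omega

lemma le_of_decreasing_chain_lt {k B : ℕ} {u : Fin k → ℕ} (hB : ∀ i, u i < B)
    (hu : ∀ i : Fin (k - 1), u ⟨i.1 + 1, by omega⟩ < u ⟨i.1, by omega⟩) : k ≤ B :=
  le_of_increasing_chain_lt (u := fun i => B - 1 - u i) (fun i => by have := hB i; omega)
    fun i => by
      have := hB ⟨i.1, by omega⟩
      have := hu i
      omega

namespace DeBruijnVertex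

variable {k M : ℕ}

def toSeq (v : DeBruijnVertex k M) (i : ℕ) : ℕ := if h : i < k then v.1 ⟨i, h⟩ else 0

lemma toSeq_lt (v : DeBruijnVertex k M) {i : ℕ} (hi : i < k) : v.toSeq i < M := by
  simp [toSeq, hi]

lemma toSeq_lt_toSeq_succ (v : DeBruijnVertex k M) {i : ℕ} (hi : i + 1 < k) :
    v.toSeq i < v.toSeq (i + 1) := by
  simpa [toSeq, hi, Nat.lt_of_succ_lt hi] using v.2 (Fin.mk_lt_mk.2 (Nat.lt_succ_self i))

lemma toSeq_of_adj {a b : DeBruijnVertex k M} (h : deBruijnAdj a b) {i : ℕ} (hi : i + 1 < k) :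
    b.toSeq i = a.toSeq (i + 1) := by
  simpa [toSeq, hi, Nat.lt_of_succ_lt hi] using congrArg Fin.val (h ⟨i, by omega⟩)

/-- Only the terms of index at most `2` are meaningful: the others involve the zero padding
of `toSeq`. -/
def descend (v : DeBruijnVertex k M) : ℕ → ℕ := stepDownSeq^[k - 3] v.toSeq

def coloring (v : DeBruijnVertex k M) : Bool := decide (v.descend 0 < v.descend 1)

lemma descend_zero_ne_one (hk : 2 ≤ k) (v : DeBruijnVertex k M) : v.descend 0 ≠ v.descend 1 :=
  iterate_stepDownSeq_ne (n := k - 1) (s := v.toSeq)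
    (fun _ _ => (v.toSeq_lt_toSeq_succ (by omega)).ne) _ (by omega)

lemma descend_lt {m : ℕ} (hm : 1 ≤ m) (hk : 4 ≤ k) (hM : M = (2 ^ ·)^[k - 3] m)
    (v : DeBruijnVertex k M) {i : ℕ} (hi : i ≤ 2) : v.descend i < 2 * m + 4 := by
  have hM' : M ≤ 2 ^ ((2 ^ ·)^[k - 4] m + 2) := by
    rw [hM, show k - 3 = k - 4 + 1 by omega, Function.iterate_succ_apply']
    exact Nat.pow_le_pow_right two_pos (Nat.le_add_right _ 2)
  have h := iterate_stepDownSeq_lt hm (k - 4) (n := k - 1) (s := v.toSeq)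
    (fun _ _ => (v.toSeq_lt_toSeq_succ (by omega)).ne)
    (fun _ _ => (v.toSeq_lt (by omega)).trans_le hM') (i := i) (by omega)
  rwa [show k - 4 + 1 = k - 3 by omega] at h

lemma descend_zero_of_adj (hk : 2 ≤ k) {a b : DeBruijnVertex k M} (h : deBruijnAdj a b) :
    b.descend 0 = a.descend 1 :=
  iterate_stepDownSeq_congr _ fun t _ => by
    rw [zero_add, add_comm]
    exact toSeq_of_adj h (by omega)

lemma coloring_eq_false_iff (hk : 2 ≤ k) (v : DeBruijnVertex k M) :
    v.coloring = false ↔ v.descend 1 < v.descend 0 := by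
  have := v.descend_zero_ne_one hk
  simp only [coloring, decide_eq_false_iff_not]
  omega

theorem not_forall_coloring_eq {m : ℕ} (hm : 1 ≤ m) (hk : 2 * m + 5 ≤ k)
    (hM : M = (2 ^ ·)^[k - 3] m) {a : Fin k → DeBruijnVertex k M}
    (hadj : ∀ i : Fin (k - 1),
      deBruijnAdj (a ⟨i.1, by have := i.isLt; omega⟩)
        (a ⟨i.1 + 1, by have := i.isLt; omega⟩)) :
    ¬∀ i j, (a i).coloring = (a j).coloring := by
  intro hmono
  have hB : ∀ i, (a i).descend 0 < 2 * m + 4 := fun i => descend_lt hm (by omega) hM _ (by omega)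
  have hlink : ∀ i : Fin (k - 1),
      (a ⟨i.1 + 1, by omega⟩).descend 0 = (a ⟨i.1, by omega⟩).descend 1 :=
    fun i => descend_zero_of_adj (by omega) (hadj i)
  suffices k ≤ 2 * m + 4 by omega
  cases hc : (a ⟨0, by omega⟩).coloring
  · refine le_of_decreasing_chain_lt hB fun i => ?_
    rw [hlink]
    exact ((coloring_eq_false_iff (by omega) _).1 ((hmono _ _).trans hc))
  · refine le_of_increasing_chain_lt hB fun i => ?_
    rw [hlink]
    simpa [coloring] using (hmono _ _).trans hc

end DeBruijnVertex

lemma fourteen_mul_floor_div_sqrt_eight_le (k : ℕ) : 14 * ⌊(k : ℝ) / √8⌋₊ ≤ 5 * k := by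
  have hsqrt : (2.8 : ℝ) < √8 := (Real.lt_sqrt (by norm_num)).2 (by norm_num)
  have hfloor : (⌊(k : ℝ) / √8⌋₊ : ℝ) ≤ k / 2.8 :=
    (Nat.floor_le (by positivity)).trans
      (div_le_div_of_nonneg_left (by positivity) (by norm_num) hsqrt.le)
  rw [le_div_iff₀ (by norm_num)] at hfloor
  have hreal : ((14 * ⌊(k : ℝ) / √8⌋₊ : ℕ) : ℝ) ≤ (5 * k : ℕ) := by push_cast; linarith
  exact_mod_cast hreal

lemma one_le_floor_div_sqrt_eight {k : ℕ} (hk : 3 ≤ k) : 1 ≤ ⌊(k : ℝ) / √8⌋₊ := by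
  have hsqrt : √8 < 3 := (Real.sqrt_lt' (by norm_num)).2 (by norm_num)
  have hk' : (3 : ℝ) ≤ k := by exact_mod_cast hk
  refine Nat.le_floor ?_
  rw [Nat.cast_one, one_le_div (by positivity)]
  linarith

/-- For all large enough `k` there is a vertex `2`-coloring of the increasing de Bruijn
graph `D(k,M)`, where `M = t_{k-2}(⌊k/√8⌋)` (the tower of height `k-3` over `⌊k/√8⌋`),
such that no directed path with `k` vertices is monochromatic. -/
theorem deBruijn_two_coloring_no_monochromatic_path :
    ∃ k₀ : ℕ, ∀ k : ℕ, k₀ ≤ k →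
      ∀ M : ℕ, M = (fun x => 2 ^ x)^[k - 3] ⌊(k : ℝ) / Real.sqrt 8⌋₊ →
        ∃ g : DeBruijnVertex k M → Bool,
          ¬∃ a : Fin k → DeBruijnVertex k M, Function.Injective a ∧
            (∀ i : Fin (k - 1),
              deBruijnAdj (a ⟨i.1, by have := i.isLt; omega⟩)
                (a ⟨i.1 + 1, by have := i.isLt; omega⟩)) ∧
            ∀ i j : Fin k, g (a i) = g (a j) := by
  refine ⟨18, fun k hk M hM => ⟨DeBruijnVertex.coloring, ?_⟩⟩
  rintro ⟨a, -, hadj, hmono⟩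
  have := fourteen_mul_floor_div_sqrt_eight_le k
  exact DeBruijnVertex.not_forall_coloring_eq (one_le_floor_div_sqrt_eight (by omega))
    (by omega) hM hadj hmono
end

section
/- Let k ≥ 3 and M ≥ 1. Let g be a map from the vertices of the increasing de Bruijn graph D(k,M) to {0,1} such that no directed path with k vertices is monochromatic for g. Let h : ({1,…,M})^k → {0,1} (formally h : (Fin k → Fin M) → Bool) satisfy: h(z) = g(z) whenever z is strictly increasing; h(z) = g(z_k, z_{k−1}, …, z_1) whenever z is strictly decreasing; h(z) = 0 whenever z is not injective; and in all remaining cases h(z) = α(z_2, z_3), where α(x,y) = 0 if x < y and α(x,y) = 1 otherwise. Then for every injective tuple z_1, …, z_{3k} of elements of {1,…,M}, it is NOT the case that h(z_1,…,z_k) = h(z_2,…,z_{k+1}) = … = h(z_{2k+1},…,z_{3k}), i.e., the 2k+1 consecutive length-k windows of (z_1,…,z_{3k}) cannot all receive the same h-value. -/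
lemma chain_lt {α : Type*} [Preorder α] (w : ℕ → α) (k : ℕ)
    (h : ∀ j, j + 1 < k → w j < w (j + 1)) :
    ∀ a b, a < b → b < k → w a < w b := by
  intro a b
  induction b with
  | zero => intro h1 _; omega
  | succ n ih =>
    intro hab hbk
    rcases Nat.lt_or_ge a n with h' | h'
    · exact (ih h' (by omega)).trans (h n hbk)
    · have ha : a = n := by omega
      subst ha
      exact h a hbk

lemma chain_gt {α : Type*} [Preorder α] (w : ℕ → α) (k : ℕ)
    (h : ∀ j, j + 1 < k → w (j + 1) < w j) :
    ∀ a b, a < b → b < k → w b < w a := by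
  intro a b
  induction b with
  | zero => intro h1 _; omega
  | succ n ih =>
    intro hab hbk
    rcases Nat.lt_or_ge a n with h' | h'
    · exact (h n hbk).trans (ih h' (by omega))
    · have ha : a = n := by omega
      subst ha
      exact h a hbk

lemma core (k : ℕ) (hk : 3 ≤ k) (P : ℕ → Prop)
    (Hw : ∀ i, i ≤ 2 * k → (∀ j, j < k - 1 → P (i + j)) ∨ ¬ P (i + 1)) :
    ∃ i, i + k ≤ 2 * k + 1 ∧
      ((∀ j, j < 2 * k - 2 → P (i + j)) ∨ (∀ j, j < 2 * k - 2 → ¬ P (i + j))) := by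
  classical
  have back : ∀ n, n ≤ 2 * k → (∀ j, j < k - 1 → P (n + j)) →
      ∀ t, t ≤ n → (∀ j, j < k - 1 → P (t + j)) := by
    intro n
    induction n with
    | zero =>
      intro _ hgn t ht
      have : t = 0 := by omega
      subst this; exact hgn
    | succ m ih =>
      intro hm hgn t ht
      rcases Nat.eq_or_lt_of_le ht with he | hlt
      · subst he; exact hgn
      · have hgm : ∀ j, j < k - 1 → P (m + j) := by
          rcases Hw m (by omega) with h1 | h2
          · exact h1
          · exact absurd (hgn 0 (by omega)) h2
        exact ih (by omega) hgm t (by omega)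
  by_cases hG : ∃ jj, jj ≤ 2 * k ∧ k - 1 ≤ jj ∧ (∀ j, j < k - 1 → P (jj + j))
  · obtain ⟨jj, h1, h2, h3⟩ := hG
    refine ⟨jj - (k - 1), by omega, Or.inl ?_⟩
    intro j hj
    have hga := back jj h1 h3 (jj - (k - 1) + min j (k - 1)) (by omega)
    have hp := hga (j - min j (k - 1)) (by omega)
    have e : jj - (k - 1) + min j (k - 1) + (j - min j (k - 1)) = jj - (k - 1) + j := by omega
    rwa [e] at hp
  · push_neg at hG
    by_cases hG0 : ∃ jj, jj ≤ 2 * k ∧ (∀ j, j < k - 1 → P (jj + j))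
    · obtain ⟨j0, hj0, hgj0⟩ := hG0
      set m := Nat.findGreatest (fun i => ∀ j, j < k - 1 → P (i + j)) (2 * k) with hmdef
      have hm_good : ∀ j, j < k - 1 → P (m + j) :=
        Nat.findGreatest_spec (P := fun i => ∀ j, j < k - 1 → P (i + j)) hj0 hgj0
      have hmle : m ≤ 2 * k := Nat.findGreatest_le _
      have hmlt : m ≤ k - 2 := by
        by_contra hcon
        obtain ⟨j', hj', hnp⟩ := hG m hmle (by omega)
        exact hnp (hm_good j' hj')
      have hmax : ∀ i', m < i' → i' ≤ 2 * k → ¬ (∀ j, j < k - 1 → P (i' + j)) := by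
        intro i' hi1 hi2 hgi
        have := Nat.le_findGreatest (P := fun i => ∀ j, j < k - 1 → P (i + j)) hi2 hgi
        omega
      have hsmall : m ≤ 2 := by
        rcases Nat.lt_or_ge k 4 with h4 | h4
        · omega
        · exfalso
          rcases Hw (m + 1) (by omega) with hg' | hnp
          · exact hmax (m + 1) (by omega) (by omega) hg'
          · have hp2 := hm_good 2 (by omega)
            have e : m + 2 = m + 1 + 1 := by omega
            rw [e] at hp2
            exact hnp hp2
      refine ⟨m + 2, by omega, Or.inr ?_⟩
      intro j hj
      have hng := hmax (m + 1 + j) (by omega) (by omega)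
      have := (Hw (m + 1 + j) (by omega)).resolve_left hng
      have e : m + 1 + j + 1 = m + 2 + j := by omega
      rwa [e] at this
    · push_neg at hG0
      refine ⟨1, by omega, Or.inr ?_⟩
      intro j hj
      have := (Hw j (by omega)).resolve_left (by
        intro hgj
        obtain ⟨j', hj', hnp⟩ := hG0 j (by omega)
        exact hnp (hgj j' hj'))
      have e : j + 1 = 1 + j := by omega
      rwa [e] at this


/-- Let `k ≥ 3`, `M ≥ 1`, and let `g` be a vertex `2`-coloring of `D(k,M)` with no
monochromatic directed path of `k` vertices. Define `h` on arbitrary `k`-tuples from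
`{1,…,M}` by: `h z = g z` if `z` is strictly increasing, `h z = g (z` reversed`)` if `z`
is strictly decreasing, `h z = 0` if `z` is not injective, and `h z = α(z₂, z₃)` otherwise,
where `α(x,y) = 0` iff `x < y`. Then no injective tuple `z₁, …, z_{3k}` has all of its
`2k+1` consecutive length-`k` windows receiving the same `h`-value. -/
theorem no_constant_run_of_h (k M : ℕ) (hk : 3 ≤ k) (hM : 1 ≤ M)
    (g : DeBruijnVertex k M → Bool)
    (hg : ¬∃ a : Fin k → DeBruijnVertex k M, Function.Injective a ∧
      (∀ i : Fin (k - 1),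
        deBruijnAdj (a ⟨i.1, by have := i.isLt; omega⟩)
          (a ⟨i.1 + 1, by have := i.isLt; omega⟩)) ∧
      ∀ i j : Fin k, g (a i) = g (a j))
    (h : (Fin k → Fin M) → Bool)
    (h_inc : ∀ (z : Fin k → Fin M) (hz : StrictMono z), h z = g ⟨z, hz⟩)
    (h_dec : ∀ (z : Fin k → Fin M) (hz : StrictAnti z),
      h z = g ⟨fun i => z i.rev, fun _ _ hij => hz (Fin.rev_lt_rev.mpr hij)⟩)
    (h_noninj : ∀ z : Fin k → Fin M, ¬Function.Injective z → h z = false)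
    (h_other : ∀ z : Fin k → Fin M, Function.Injective z → ¬StrictMono z → ¬StrictAnti z →
      h z = if z ⟨1, by omega⟩ < z ⟨2, by omega⟩ then false else true) :
    ∀ z : Fin (3 * k) → Fin M, Function.Injective z →
      ¬∀ i i' : Fin (2 * k + 1),
        (h fun t : Fin k => z ⟨i.1 + t.1, by have := i.isLt; have := t.isLt; omega⟩) =
        (h fun t : Fin k => z ⟨i'.1 + t.1, by have := i'.isLt; have := t.isLt; omega⟩) := by
  intro z hzinj H
  have hk0 : 0 < 3 * k := by omega
  set Z : ℕ → Fin M := fun n => z ⟨n % (3 * k), Nat.mod_lt n hk0⟩ with hZdef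
  have hZ : ∀ n (hn : n < 3 * k), Z n = z ⟨n, hn⟩ := by
    intro n hn
    rw [hZdef]
    exact congrArg z (Fin.ext (Nat.mod_eq_of_lt hn))
  have zinj : ∀ a b, a < 3 * k → b < 3 * k → Z a = Z b → a = b := by
    intro a b ha hb hab
    rw [hZ a ha, hZ b hb] at hab
    exact congrArg Fin.val (hzinj hab)
  have Hc : ∀ m, m ≤ 2 * k →
      h (fun u : Fin k => Z (m + u.1)) = h (fun u : Fin k => Z (0 + u.1)) := by
    intro m hm
    have hmain := H ⟨m, by omega⟩ ⟨0, by omega⟩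
    convert hmain using 2
    · funext u; exact hZ (m + u.1) (by have := u.isLt; omega)
    · funext u; exact hZ (0 + u.1) (by have := u.isLt; omega)
  have winj : ∀ m, m ≤ 2 * k → Function.Injective (fun u : Fin k => Z (m + u.1)) := by
    intro m hm u u' he
    have := zinj (m + u.1) (m + u'.1) (by have := u.isLt; omega) (by have := u'.isLt; omega) he
    exact Fin.ext (by omega)
  -- finisher 1 : an increasing run of length 2k-2 gives a monochromatic increasing path
  have finMono : ∀ i, i + k ≤ 2 * k + 1 →
      (∀ j, j < 2 * k - 2 → Z (i + j) < Z (i + j + 1)) → False := by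
    intro i hik hrun
    have vmono : ∀ t, t < k → StrictMono (fun u : Fin k => Z (i + t + u.1)) := by
      intro t ht u u' huu
      refine chain_lt (fun n => Z (i + t + n)) k (fun j hj => ?_) u.1 u'.1 (Fin.lt_def.mp huu) u'.isLt
      have h2 := hrun (t + j) (by omega)
      have e2 : i + (t + j) + 1 = i + t + (j + 1) := by omega
      have e1 : i + (t + j) = i + t + j := by omega
      rw [e2, e1] at h2
      exact h2
    refine hg ⟨fun t : Fin k => ⟨fun u : Fin k => Z (i + t.1 + u.1), vmono t.1 t.isLt⟩, ?_, ?_, ?_⟩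
    · intro s t hst
      have h0 : Z (i + s.1 + (0 : ℕ)) = Z (i + t.1 + (0 : ℕ)) :=
        congrFun (congrArg Subtype.val hst) ⟨0, by omega⟩
      have hs := s.isLt
      have ht := t.isLt
      have := zinj (i + s.1 + 0) (i + t.1 + 0) (by omega) (by omega) h0
      exact Fin.ext (by omega)
    · intro ii jj
      show Z (i + (ii.1 + 1) + jj.1) = Z (i + ii.1 + (jj.1 + 1))
      exact congrArg Z (by omega)
    · intro s t
      have hgv : ∀ r : Fin k,
          g ⟨fun u : Fin k => Z (i + r.1 + u.1), vmono r.1 r.isLt⟩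
            = h (fun u : Fin k => Z (0 + u.1)) := by
        intro r
        rw [← h_inc (fun u : Fin k => Z (i + r.1 + u.1)) (vmono r.1 r.isLt)]
        exact Hc (i + r.1) (by have := r.isLt; omega)
      exact (hgv s).trans (hgv t).symm
  -- finisher 2 : a decreasing run of length 2k-2 gives a monochromatic path via reversal
  have finAnti : ∀ i, i + k ≤ 2 * k + 1 →
      (∀ j, j < 2 * k - 2 → Z (i + j + 1) < Z (i + j)) → False := by
    intro i hik hrun
    have vanti : ∀ t, t < k → StrictAnti (fun u : Fin k => Z (i + (k - 1 - t) + u.1)) := by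
      intro t ht u u' huu
      refine chain_gt (fun n => Z (i + (k - 1 - t) + n)) k (fun j hj => ?_) u.1 u'.1
        (Fin.lt_def.mp huu) u'.isLt
      have h2 := hrun (k - 1 - t + j) (by omega)
      have e1 : i + (k - 1 - t + j) + 1 = i + (k - 1 - t) + (j + 1) := by omega
      have e2 : i + (k - 1 - t + j) = i + (k - 1 - t) + j := by omega
      rw [e1, e2] at h2
      exact h2
    have vmono2 : ∀ t, t < k → StrictMono (fun u : Fin k => Z (i + (k - 1 - t) + (k - 1 - u.1))) := by
      intro t ht u u' huu
      refine chain_lt (fun n => Z (i + (k - 1 - t) + (k - 1 - n))) k (fun j hj => ?_) u.1 u'.1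
        (Fin.lt_def.mp huu) u'.isLt
      have h2 := hrun (k - 1 - t + (k - 2 - j)) (by omega)
      have e1 : i + (k - 1 - t + (k - 2 - j)) + 1 = i + (k - 1 - t) + (k - 1 - j) := by omega
      have e2 : i + (k - 1 - t + (k - 2 - j)) = i + (k - 1 - t) + (k - 1 - (j + 1)) := by omega
      rw [e1, e2] at h2
      exact h2
    refine hg ⟨fun t : Fin k =>
      ⟨fun u : Fin k => Z (i + (k - 1 - t.1) + (k - 1 - u.1)), vmono2 t.1 t.isLt⟩, ?_, ?_, ?_⟩
    · intro s t hst
      have h0 : Z (i + (k - 1 - s.1) + (k - 1 - (k - 1))) = Z (i + (k - 1 - t.1) + (k - 1 - (k - 1))) :=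
        congrFun (congrArg Subtype.val hst) ⟨k - 1, by omega⟩
      have hs := s.isLt
      have ht := t.isLt
      have := zinj (i + (k - 1 - s.1) + (k - 1 - (k - 1))) (i + (k - 1 - t.1) + (k - 1 - (k - 1)))
        (by omega) (by omega) h0
      exact Fin.ext (by omega)
    · intro ii jj
      show Z (i + (k - 1 - (ii.1 + 1)) + (k - 1 - jj.1)) = Z (i + (k - 1 - ii.1) + (k - 1 - (jj.1 + 1)))
      have h1 := ii.isLt
      have h2 := jj.isLt
      exact congrArg Z (by omega)
    · intro s t
      have hgv : ∀ r : Fin k,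
          g ⟨fun u : Fin k => Z (i + (k - 1 - r.1) + (k - 1 - u.1)), vmono2 r.1 r.isLt⟩
            = h (fun u : Fin k => Z (0 + u.1)) := by
        intro r
        have hdec := h_dec (fun u : Fin k => Z (i + (k - 1 - r.1) + u.1)) (vanti r.1 r.isLt)
        have hcm := Hc (i + (k - 1 - r.1)) (by have := r.isLt; omega)
        rw [hdec] at hcm
        refine Eq.trans (congrArg g (Subtype.ext (funext fun u => ?_))) hcm
        have hu := u.isLt
        have hr : (Fin.rev u).1 = k - (u.1 + 1) := Fin.val_rev u
        exact congrArg Z (by omega)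
      exact (hgv s).trans (hgv t).symm
  -- case on the common color
  cases hcv : h (fun u : Fin k => Z (0 + u.1)) with
  | false =>
    have Hw : ∀ m, m ≤ 2 * k →
        (∀ j, j < k - 1 → Z (m + j + 1) < Z (m + j)) ∨ ¬ (Z (m + 1 + 1) < Z (m + 1)) := by
      intro m hm
      by_cases hmono : StrictMono (fun u : Fin k => Z (m + u.1))
      · right
        have hlt : (⟨1, by omega⟩ : Fin k) < ⟨2, by omega⟩ := Fin.mk_lt_mk.mpr (by omega)
        have h1 : Z (m + 1) < Z (m + 2) := hmono hlt
        intro hcon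
        have e : m + 1 + 1 = m + 2 := by omega
        rw [e] at hcon
        exact absurd h1 (lt_asymm hcon)
      · by_cases hanti : StrictAnti (fun u : Fin k => Z (m + u.1))
        · left
          intro j hj
          have hlt : (⟨j, by omega⟩ : Fin k) < ⟨j + 1, by omega⟩ := Fin.mk_lt_mk.mpr (by omega)
          have h1 : Z (m + (j + 1)) < Z (m + j) := hanti hlt
          have e : m + (j + 1) = m + j + 1 := by omega
          rwa [e] at h1
        · right
          have hoth := h_other (fun u : Fin k => Z (m + u.1)) (winj m hm) hmono hanti
          rw [Hc m hm, hcv] at hoth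
          intro hcon
          have e : m + 1 + 1 = m + 2 := by omega
          rw [e] at hcon
          have hnlt : ¬ (Z (m + 1) < Z (m + 2)) := lt_asymm hcon
          split at hoth
          · next hcond => exact hnlt hcond
          · next => exact Bool.noConfusion hoth
    obtain ⟨i, hik, hrun | hrun⟩ := core k hk (fun n => Z (n + 1) < Z n) Hw
    · exact finAnti i hik hrun
    · refine finMono i hik ?_
      intro j hj
      have hne : Z (i + j) ≠ Z (i + j + 1) := by
        intro hEq
        have := zinj (i + j) (i + j + 1) (by omega) (by omega) hEq
        omega
      rcases lt_or_gt_of_ne hne with hl | hgt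
      · exact hl
      · exact absurd hgt (hrun j hj)
  | true =>
    have Hw : ∀ m, m ≤ 2 * k →
        (∀ j, j < k - 1 → Z (m + j) < Z (m + j + 1)) ∨ ¬ (Z (m + 1) < Z (m + 1 + 1)) := by
      intro m hm
      by_cases hmono : StrictMono (fun u : Fin k => Z (m + u.1))
      · left
        intro j hj
        have hlt : (⟨j, by omega⟩ : Fin k) < ⟨j + 1, by omega⟩ := Fin.mk_lt_mk.mpr (by omega)
        have h1 : Z (m + j) < Z (m + (j + 1)) := hmono hlt
        have e : m + (j + 1) = m + j + 1 := by omega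
        rwa [e] at h1
      · by_cases hanti : StrictAnti (fun u : Fin k => Z (m + u.1))
        · right
          have hlt : (⟨1, by omega⟩ : Fin k) < ⟨2, by omega⟩ := Fin.mk_lt_mk.mpr (by omega)
          have h1 : Z (m + 2) < Z (m + 1) := hanti hlt
          intro hcon
          have e : m + 1 + 1 = m + 2 := by omega
          rw [e] at hcon
          exact absurd hcon (lt_asymm h1)
        · right
          have hoth := h_other (fun u : Fin k => Z (m + u.1)) (winj m hm) hmono hanti
          rw [Hc m hm, hcv] at hoth
          intro hcon
          have e : m + 1 + 1 = m + 2 := by omega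
          rw [e] at hcon
          split at hoth
          · next => exact Bool.noConfusion hoth
          · next hncond => exact hncond hcon
    obtain ⟨i, hik, hrun | hrun⟩ := core k hk (fun n => Z n < Z (n + 1)) Hw
    · exact finMono i hik hrun
    · refine finAnti i hik ?_
      intro j hj
      have hne : Z (i + j) ≠ Z (i + j + 1) := by
        intro hEq
        have := zinj (i + j) (i + j + 1) (by omega) (by omega) hEq
        omega
      rcases lt_or_gt_of_ne hne with hl | hgt
      · exact absurd hl (hrun j hj)
      · exact hgt
end

section
/- Let V be a finite type and adj : V → V → Prop a directed graph on V, and let q ≥ 1. Suppose C : {(u,v) : adj u v} → Fin q is an edge coloring with no monochromatic directed path of 2 edges, i.e., there are no vertices u, v, w with adj u v, adj v w and C(u,v) = C(v,w). Then the directed graph admits a proper vertex coloring with 2^q colors: a map c' : V → Fin (2^q) with c'(u) ≠ c'(v) whenever adj u v. (Indeed, one may take c'(u) = {C(u,v) : adj u v} ⊆ {1,…,q}.) -/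
/-- If a directed graph on a finite type has an edge coloring with `q` colors containing no
monochromatic directed path of `2` edges, then it has a proper vertex coloring with `2^q`
colors. -/
theorem vertex_coloring_of_edge_coloring {V : Type*} [Finite V] (adj : V → V → Prop)
    (q : ℕ) (hq : 1 ≤ q) (C : ∀ u v : V, adj u v → Fin q)
    (hC : ∀ (u v w : V) (h1 : adj u v) (h2 : adj v w), C u v h1 ≠ C v w h2) :
    ∃ c' : V → Fin (2 ^ q), ∀ u v : V, adj u v → c' u ≠ c' v := by
  classical
  have hcard : Fintype.card (Finset (Fin q)) = 2 ^ q := by simp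
  let e : Finset (Fin q) ≃ Fin (2 ^ q) := Fintype.equivFinOfCardEq hcard
  let c : V → Finset (Fin q) := fun u => Finset.univ.filter (fun i => ∃ v h, C u v h = i)
  refine ⟨fun u => e (c u), fun u v huv hne => ?_⟩
  have h1 : C u v huv ∈ c u := by
    simp only [c, Finset.mem_filter, Finset.mem_univ, true_and]
    exact ⟨v, huv, rfl⟩
  have h2 : C u v huv ∉ c v := by
    simp only [c, Finset.mem_filter, Finset.mem_univ, true_and]
    rintro ⟨w, hw, hcw⟩
    exact hC u v w huv hw hcw.symm
  have : c u = c v := e.injective hne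
  exact h2 (this ▸ h1)
end
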